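/- arXiv:1402.0349 — 12 statements merged into one kernel-verified Lean document; each statement's English description precedes it below -/
import Mathlib

section
/- Let C*_n be the set of binary strings of length n that are concatenations of blocks from {0, 01, 011}. For any two distinct strings x, y in C*_n, either there exists an index i < n-1 with (x_i, x_{i+1}) ≠ (y_i, y_{i+1}) and both pairs lie in {00, 01, 10} (i.e., some consecutive pair differs and neither pair equals 11), or x and y contain a different number of occurrences of the block 011 in their decompositions. -/
def blocks3 : List (List Bool) := [[false], [false, true], [false, true, true]]

def Decomp (S : List (List Bool)) (L : List (List Bool)) (x : List Bool) : Prop :=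
  (∀ b ∈ L, b ∈ S) ∧ L.flatten = x

def bpair (x : List Bool) (i : ℕ) : Bool × Bool := (x.getD i false, x.getD (i+1) false)

/-- `x, y` of length `n` are distinguishable for the channel graph `F`, the complete graph
on `{00, 01, 10}`: some consecutive pair differs and neither pair equals `11`. -/
def Fdist (n : ℕ) (x y : List Bool) : Prop :=
  ∃ i, i + 1 < n ∧ bpair x i ≠ bpair y i ∧
    bpair x i ≠ (true, true) ∧ bpair y i ≠ (true, true)

/-- Number of adjacent `11` pairs in a string. -/
def c11 : List Bool → ℕ
  | a :: b :: t => (if a && b then 1 else 0) + c11 (b :: t)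
  | _ => 0

lemma c11_cons_false (t : List Bool) : c11 (false :: t) = c11 t := by
  cases t <;> simp [c11]

lemma c11_cons_true (t : List Bool) (h : t.getD 0 false = false) :
    c11 (true :: t) = c11 t := by
  cases t with
  | nil => rfl
  | cons a t' =>
    simp only [List.getD_cons_zero] at h
    subst h
    simp [c11]

lemma c11_snoc (p : List Bool) (b : Bool) :
    c11 (p ++ [b]) = c11 p + (if p.getLast? = some true ∧ b = true then 1 else 0) := by
  induction p with
  | nil => cases b <;> simp [c11]
  | cons a p ih =>
    cases p with
    | nil => cases a <;> cases b <;> simp [c11]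
    | cons c t =>
      have h1 : c11 (a :: c :: t ++ [b]) = (if a && c then 1 else 0) + c11 (c :: t ++ [b]) := rfl
      have h2 : c11 (a :: c :: t) = (if a && c then 1 else 0) + c11 (c :: t) := rfl
      rw [List.cons_append] at h1 ⊢
      rw [h1, h2, ih, List.getLast?_cons_cons]
      omega

lemma flatten_head (L : List (List Bool)) (h : ∀ b ∈ L, b ∈ blocks3) :
    (L.flatten).getD 0 false = false := by
  induction L with
  | nil => simp
  | cons b L ih =>
    have hb := h b (by simp)
    simp only [blocks3, List.mem_cons, List.mem_singleton, List.not_mem_nil, or_false] at hb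
    rcases hb with rfl | rfl | rfl <;> simp

lemma flatten_c11 (L : List (List Bool)) (h : ∀ b ∈ L, b ∈ blocks3) :
    c11 L.flatten = L.count [false, true, true] := by
  induction L with
  | nil => simp [c11]
  | cons b L ih =>
    have hb := h b (by simp)
    have hsub : ∀ b ∈ L, b ∈ blocks3 := fun b hb => h b (by simp [hb])
    have hd := flatten_head L hsub
    have ih' := ih hsub
    simp only [blocks3, List.mem_cons, List.mem_singleton, List.not_mem_nil, or_false] at hb
    rcases hb with rfl | rfl | rfl
    · rw [List.flatten_cons, List.singleton_append, c11_cons_false, ih', List.count_cons]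
      simp
    · rw [List.flatten_cons, List.cons_append, List.singleton_append, c11_cons_false,
        c11_cons_true _ hd, ih', List.count_cons]
      simp
    · rw [List.flatten_cons, List.cons_append, List.cons_append, List.singleton_append,
        c11_cons_false]
      have : c11 (true :: true :: L.flatten) = 1 + c11 (true :: L.flatten) := by
        simp [c11]
      rw [this, c11_cons_true _ hd, ih', List.count_cons]
      simp
      omega

lemma flatten_no111 (L : List (List Bool)) (h : ∀ b ∈ L, b ∈ blocks3) :
    ∀ i, (L.flatten).getD i false = true → (L.flatten).getD (i+1) false = true →
      (L.flatten).getD (i+2) false = false := by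
  induction L with
  | nil => intro i h1 _; simp at h1
  | cons b L ih =>
    have hb := h b (by simp)
    have hsub : ∀ b ∈ L, b ∈ blocks3 := fun b hb => h b (by simp [hb])
    have hd := flatten_head L hsub
    have ih' := ih hsub
    simp only [blocks3, List.mem_cons, List.mem_singleton, List.not_mem_nil, or_false] at hb
    intro i h1 h2
    rcases hb with rfl | rfl | rfl
    · rw [List.flatten_cons, List.singleton_append] at h1 h2 ⊢
      match i with
      | 0 => simp at h1
      | k + 1 =>
        simp only [List.getD_cons_succ] at h1 h2 ⊢
        exact ih' k h1 h2
    · rw [List.flatten_cons, List.cons_append, List.singleton_append] at h1 h2 ⊢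
      match i with
      | 0 => simp at h1
      | 1 =>
        simp only [List.getD_cons_succ, List.getD_cons_zero] at h2
        rw [hd] at h2; exact absurd h2 (by simp)
      | k + 2 =>
        simp only [List.getD_cons_succ] at h1 h2 ⊢
        exact ih' k h1 h2
    · rw [List.flatten_cons, List.cons_append, List.cons_append, List.singleton_append]
        at h1 h2 ⊢
      match i with
      | 0 => simp at h1
      | 1 => simp only [List.getD_cons_succ, List.getD_cons_zero]; exact hd
      | 2 =>
        simp only [List.getD_cons_succ, List.getD_cons_zero] at h2
        rw [hd] at h2; exact absurd h2 (by simp)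
      | k + 3 =>
        simp only [List.getD_cons_succ] at h1 h2 ⊢
        exact ih' k h1 h2

lemma singleton_of_len1 (l : List Bool) (h : l.length = 1) : l = [l.getD 0 false] := by
  rcases l with _ | ⟨a, _ | ⟨b, t⟩⟩ <;> simp_all

lemma key (n : ℕ) (x y : List Bool) (hx : x.length = n) (hy : y.length = n)
    (hx0 : x.getD 0 false = false)
    (hx111 : ∀ i, x.getD i false = true → x.getD (i+1) false = true →
      x.getD (i+2) false = false)
    (i : ℕ) (hilt : i < n)
    (hxi : x.getD i false = true) (hyi : y.getD i false = false)
    (hpre : ∀ j < i, x.getD j false = y.getD j false) :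
    Fdist n x y ∨ c11 x ≠ c11 y := by
  obtain ⟨k, rfl⟩ : ∃ k, i = k + 1 := by
    cases i with
    | zero => rw [hx0] at hxi; exact absurd hxi (by simp)
    | succ k => exact ⟨k, rfl⟩
  by_cases hA : k + 2 < n
  · by_cases h2 : x.getD (k+2) false = true
    · -- x has `11` at positions k+1,k+2, so x_k = false
      have hk : x.getD k false = false := by
        by_contra hcon
        rw [Bool.not_eq_false] at hcon
        rw [hx111 k hcon hxi] at h2
        exact absurd h2 (by simp)
      have hyk : y.getD k false = false := by rw [← hpre k (by omega), hk]
      left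
      refine ⟨k, by omega, ?_, ?_, ?_⟩ <;>
        simp only [bpair, hk, hyk, hxi, hyi] <;> simp [Prod.ext_iff]
    · rw [Bool.not_eq_true] at h2
      left
      refine ⟨k + 1, hA, ?_, ?_, ?_⟩ <;>
        simp only [bpair, hxi, hyi, h2] <;> simp [Prod.ext_iff]
  · have hn : n = k + 2 := by omega
    by_cases hk : x.getD k false = true
    · -- differ only at last position, preceded by a 1 : counts differ
      right
      have hxlen : x.length = k + 2 := by omega
      have hylen : y.length = k + 2 := by omega
      have hdx : x.drop (k+1) = [true] := by
        have hl : (x.drop (k+1)).length = 1 := by simp [hxlen]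
        rw [singleton_of_len1 _ hl]
        congr 1
        have h0 : (0 : ℕ) < (x.drop (k+1)).length := by omega
        rw [List.getD_eq_getElem _ _ h0, List.getElem_drop,
          ← List.getD_eq_getElem x false (by omega : k + 1 + 0 < x.length)]
        simpa using hxi
      have hdy : y.drop (k+1) = [false] := by
        have hl : (y.drop (k+1)).length = 1 := by simp [hylen]
        rw [singleton_of_len1 _ hl]
        congr 1
        have h0 : (0 : ℕ) < (y.drop (k+1)).length := by omega
        rw [List.getD_eq_getElem _ _ h0, List.getElem_drop,
          ← List.getD_eq_getElem y false (by omega : k + 1 + 0 < y.length)]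
        simpa using hyi
      have hpq : x.take (k+1) = y.take (k+1) := by
        apply List.ext_getElem (by simp [hxlen, hylen])
        intro j hj1 hj2
        have hjk : j < k + 1 := by simpa [hxlen] using hj1
        rw [List.getElem_take, List.getElem_take,
          ← List.getD_eq_getElem x false (by omega), ← List.getD_eq_getElem y false (by omega)]
        exact hpre j hjk
      have hlast : (x.take (k+1)).getLast? = some true := by
        have hlen : (x.take (k+1)).length = k + 1 := by simp [hxlen]
        rw [List.getLast?_eq_getElem?, hlen]
        simp only [Nat.add_sub_cancel]
        rw [List.getElem?_eq_getElem (by omega), List.getElem_take,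
          ← List.getD_eq_getElem x false (by omega)]
        rw [hk]
      have hex : x = x.take (k+1) ++ [true] := by
        conv_lhs => rw [← List.take_append_drop (k+1) x]
        rw [hdx]
      have hey : y = x.take (k+1) ++ [false] := by
        conv_lhs => rw [← List.take_append_drop (k+1) y]
        rw [hdy, hpq]
      rw [hex, hey, c11_snoc, c11_snoc, hlast]
      simp
    · rw [Bool.not_eq_true] at hk
      have hyk : y.getD k false = false := by rw [← hpre k (by omega), hk]
      left
      refine ⟨k, by omega, ?_, ?_, ?_⟩ <;>
        simp only [bpair, hk, hyk, hxi, hyi] <;> simp [Prod.ext_iff]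

lemma Fdist_symm {n : ℕ} {x y : List Bool} (h : Fdist n y x) : Fdist n x y := by
  obtain ⟨i, h1, h2, h3, h4⟩ := h
  exact ⟨i, h1, fun he => h2 he.symm, h4, h3⟩

/-- For distinct strings of length `n` decomposable into the blocks 0, 01, 011, either they
are `F`-distinguishable or their decompositions contain a different number of blocks 011. -/
theorem stmt1 (n : ℕ) (x y : List Bool) (hx : x.length = n) (hy : y.length = n)
    (hxy : x ≠ y) (Lx Ly : List (List Bool))
    (hLx : Decomp blocks3 Lx x) (hLy : Decomp blocks3 Ly y) :
    Fdist n x y ∨ Lx.count [false, true, true] ≠ Ly.count [false, true, true] := by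
  have cx : c11 x = Lx.count [false, true, true] := by
    rw [← hLx.2]; exact flatten_c11 _ hLx.1
  have cy : c11 y = Ly.count [false, true, true] := by
    rw [← hLy.2]; exact flatten_c11 _ hLy.1
  have hx0 : x.getD 0 false = false := by rw [← hLx.2]; exact flatten_head _ hLx.1
  have hy0 : y.getD 0 false = false := by rw [← hLy.2]; exact flatten_head _ hLy.1
  have hx111 := hLx.2 ▸ flatten_no111 _ hLx.1
  have hy111 := hLy.2 ▸ flatten_no111 _ hLy.1
  rw [← cx, ← cy]
  have hne : ∃ i, x.getD i false ≠ y.getD i false := by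
    by_contra hcon
    push_neg at hcon
    apply hxy
    apply List.ext_getElem (by omega)
    intro j hj1 hj2
    rw [← List.getD_eq_getElem x false hj1, ← List.getD_eq_getElem y false hj2]
    exact hcon j
  classical
  set i := Nat.find hne with hidef
  have hi : x.getD i false ≠ y.getD i false := Nat.find_spec hne
  have hmin : ∀ j < i, x.getD j false = y.getD j false := by
    intro j hj
    have := Nat.find_min hne hj
    simpa using this
  have hilt : i < n := by
    by_contra hcon
    push_neg at hcon
    rw [List.getD_eq_default _ _ (by omega), List.getD_eq_default _ _ (by omega)] at hi
    exact hi rfl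
  cases hbx : x.getD i false <;> cases hby : y.getD i false
  · rw [hbx, hby] at hi; exact absurd rfl hi
  · have := key n y x hy hx hy0 hy111 i hilt hby hbx (fun j hj => (hmin j hj).symm)
    rcases this with h | h
    · exact Or.inl (Fdist_symm h)
    · exact Or.inr (Ne.symm h)
  · exact key n x y hx hy hx0 hx111 i hilt hbx hby hmin
  · rw [hbx, hby] at hi; exact absurd rfl hi
end

section
/- Let B ⊆ {0,1}^n be a code all of whose distinct pairs are F-distinguishable, where F is the complete graph on {00,01,10}. If some x ∈ B contains the substring 111, then replacing one occurrence of 111 in x by 101 yields a string z ∉ B such that (B \ {x}) ∪ {z} is again a pairwise F-distinguishable code of the same cardinality. -/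
/-!
A witness of `F`-distinguishability is a position whose pair lies in `{00, 01, 10}` for both
strings, so it is never a `11` pair. Inside an occurrence of `111` both pairs containing the middle
bit are `11`, hence no witness involving `x` sees that bit, and turning it into `0` keeps every
witness valid. The new word `z` is then distinguishable from every other codeword; in particular it
is not in `B`, since no string is distinguishable from itself.
-/

instance Fdist.instSymm (n : ℕ) : Std.Symm (Fdist n) :=
  ⟨fun _ _ ⟨i, hi, hne, hx, hy⟩ => ⟨i, hi, Ne.symm hne, hy, hx⟩⟩

lemma Fdist.irrefl (n : ℕ) (x : List Bool) : ¬ Fdist n x x :=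
  fun ⟨_, _, hne, _⟩ => hne rfl

lemma bpair_set_of_ne (x : List Bool) (b : Bool) {i k : ℕ} (hi : i ≠ k) (hi1 : i + 1 ≠ k) :
    bpair (x.set k b) i = bpair x i := by
  simp [bpair, List.getD_eq_getElem?_getD, Ne.symm hi, Ne.symm hi1]

lemma Fdist.set_of_bpair_eq_true {n k : ℕ} {x y : List Bool}
    (hk : bpair x k = (true, true)) (hk1 : bpair x (k + 1) = (true, true))
    (h : Fdist n x y) (b : Bool) : Fdist n (x.set (k + 1) b) y := by
  obtain ⟨i, hin, hne, hx, hy⟩ := h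
  have hik : i ≠ k := by rintro rfl; exact hx hk
  have hik1 : i ≠ k + 1 := by rintro rfl; exact hx hk1
  rw [← bpair_set_of_ne x b hik1 (by omega)] at hne hx
  exact ⟨i, hin, hne, hx, hy⟩

lemma bpair_append_111 (u v : List Bool) {i : ℕ} (hi : i = u.length ∨ i = u.length + 1) :
    bpair (u ++ [true, true, true] ++ v) i = (true, true) := by
  rcases hi with rfl | rfl <;> simp [bpair, List.getD_eq_getElem?_getD, Nat.add_assoc]

lemma set_append_111 (u v : List Bool) :
    (u ++ [true, true, true] ++ v).set (u.length + 1) false = u ++ [true, false, true] ++ v := by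
  simp [List.set_append_right]

lemma Fdist.replace_111 {n : ℕ} {u v y : List Bool} (h : Fdist n (u ++ [true, true, true] ++ v) y) :
    Fdist n (u ++ [true, false, true] ++ v) y := by
  rw [← set_append_111]
  exact h.set_of_bpair_eq_true (bpair_append_111 u v (.inl rfl))
    (bpair_append_111 u v (.inr rfl)) false

/-- Replacing an occurrence of 111 in a codeword by 101 preserves pairwise
`F`-distinguishability and the cardinality of the code. -/
theorem stmt4 (n : ℕ) (B : Set (List Bool)) (hB : ∀ x ∈ B, x.length = n)
    (hdist : B.Pairwise (Fdist n))
    (x : List Bool) (hx : x ∈ B) (u v : List Bool)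
    (hsplit : x = u ++ [true, true, true] ++ v)
    (z : List Bool) (hz : z = u ++ [true, false, true] ++ v) :
    z ∉ B ∧ (∀ w ∈ (B \ {x}) ∪ {z}, w.length = n) ∧
      ((B \ {x}) ∪ {z} : Set (List Bool)).Pairwise (Fdist n) ∧
      ((B \ {x}) ∪ {z} : Set (List Bool)).ncard = B.ncard := by
  have hzx : z ≠ x := by simp [hz, hsplit]
  have hzB : ∀ y ∈ B \ {x}, Fdist n z y := fun y ⟨hy, hyx⟩ =>
    hz ▸ Fdist.replace_111 (hsplit ▸ hdist hx hy (Ne.symm hyx))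
  have hznB : z ∉ B := fun h => Fdist.irrefl n z (hzB z ⟨h, hzx⟩)
  rw [Set.union_singleton]
  refine ⟨hznB, ?_, Set.pairwise_insert_of_symm.2 ⟨hdist.mono Set.sdiff_subset,
    fun y hy _ => hzB y hy⟩, Set.ncard_exchange hznB hx⟩
  rintro w (rfl | ⟨hw, -⟩)
  · simp [hz, ← hB x hx, hsplit]
  · exact hB w hw
end

section
/- The maximum size M(F,n) of a pairwise F-distinguishable code in {0,1}^n equals the maximum size of such a code contained in D_n, the set of binary strings of length n with no three consecutive 1's. -/
/-- `Dset n`: binary strings of length `n` with no three consecutive 1's. -/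
def Dset (n : ℕ) : Set (List Bool) :=
  {x | x.length = n ∧ ¬ [true, true, true] <:+: x}

/-- Clear the middle bit of every occurrence of three consecutive ones. -/
def g : List Bool → List Bool
  | true :: true :: true :: r => true :: false :: g (true :: r)
  | a :: r => a :: g r
  | [] => []
termination_by x => x.length

lemma g_cons (a : Bool) (r : List Bool)
    (h : ∀ r', a = true → r = true :: true :: r' → False) : g (a :: r) = a :: g r := by
  match a, r with
  | false, r => simp [g]
  | true, [] => simp [g]
  | true, [b] => rcases b <;> simp [g]
  | true, false :: r => simp [g]
  | true, true :: false :: r => simp [g]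
  | true, true :: true :: r => exact absurd (h r rfl rfl) (by simp)

lemma g_length (x : List Bool) : (g x).length = x.length := by
  induction x using g.induct with
  | case1 r ih => simp [g]; simp at ih; omega
  | case2 a r h ih => rw [g_cons a r h]; simp [ih]
  | case3 => simp [g]

/-- `g` only changes bits whose left neighbor and itself are true. -/
lemma g_getD (x : List Bool) (i : ℕ)
    (h : (g x).getD i false ≠ x.getD i false) :
    1 ≤ i ∧ x.getD (i-1) false = true ∧ x.getD i false = true ∧
      x.getD (i+1) false = true := by
  induction x using g.induct generalizing i with
  | case1 r ih =>
      rw [show g (true :: true :: true :: r) = true :: false :: g (true :: r) from by simp [g]] at h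
      match i with
      | 0 => simp at h
      | 1 => refine ⟨by omega, by simp, by simp, by simp⟩
      | (j+2) =>
          have h' : (g (true :: r)).getD j false ≠ (true :: r).getD j false := by
            simpa using h
          obtain ⟨h1, h2, h3, h4⟩ := ih j h'
          refine ⟨by omega, ?_, ?_, ?_⟩
          · match j, h1 with
            | (k+1), _ => simpa using h2
          · simpa using h3
          · simpa using h4
  | case2 a r hc ih =>
      rw [g_cons a r hc] at h
      match i with
      | 0 => simp at h
      | (j+1) =>
          have h' : (g r).getD j false ≠ r.getD j false := by simpa using h
          obtain ⟨h1, h2, h3, h4⟩ := ih j h'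
          refine ⟨by omega, ?_, by simpa using h3, by simpa using h4⟩
          match j, h1 with
          | (k+1), _ => simpa using h2
  | case3 => simp [g] at h

/-- if `g x` starts with two trues then so does `x`. -/
lemma g_tt (x : List Bool) (m : List Bool) (h : g x = true :: true :: m) :
    ∃ r', x = true :: true :: r' := by
  match x with
  | [] => simp [g] at h
  | false :: r => rw [g_cons false r (by simp)] at h; simp at h
  | true :: [] => simp [g] at h
  | true :: false :: r =>
      rw [g_cons true (false :: r) (by simp)] at h
      rw [g_cons false r (by simp)] at h
      simp at h
  | true :: true :: r => exact ⟨r, rfl⟩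

lemma g_no111 (x : List Bool) : ¬ [true, true, true] <:+: g x := by
  induction x using g.induct with
  | case1 r ih =>
      rw [show g (true :: true :: true :: r) = true :: false :: g (true :: r) from by simp [g]]
      intro h
      rw [List.infix_cons_iff] at h
      rcases h with h | h
      · rcases h with ⟨t, ht⟩; simp at ht
      · rw [List.infix_cons_iff] at h
        rcases h with h | h
        · rcases h with ⟨t, ht⟩; simp at ht
        · exact ih h
  | case2 a r hc ih =>
      rw [g_cons a r hc]
      intro h
      rw [List.infix_cons_iff] at h
      rcases h with h | h
      · rcases h with ⟨t, ht⟩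
        simp only [List.cons_append, List.nil_append, List.cons.injEq] at ht
        obtain ⟨ha, hm⟩ := ht
        obtain ⟨r', hr'⟩ := g_tt r _ hm.symm
        exact hc r' ha.symm hr'
      · exact ih h
  | case3 => simp [g]

/-- `g` preserves any pair that is not `(1,1)`. -/
lemma g_bpair (x : List Bool) (i : ℕ) (h : bpair x i ≠ (true, true)) :
    bpair (g x) i = bpair x i := by
  unfold bpair at *
  have h1 : (g x).getD i false = x.getD i false := by
    by_contra hne
    obtain ⟨_, _, h3, h4⟩ := g_getD x i hne
    exact h (by rw [Prod.mk.injEq]; exact ⟨h3, h4⟩)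
  have h2 : (g x).getD (i+1) false = x.getD (i+1) false := by
    by_contra hne
    obtain ⟨_, h2', h3, _⟩ := g_getD x (i+1) hne
    simp only [Nat.add_sub_cancel] at h2'
    exact h (by rw [Prod.mk.injEq]; exact ⟨h2', h3⟩)
  rw [h1, h2]

/-- The maximum size of a pairwise `F`-distinguishable code of length `n` equals the
maximum size of such a code contained in `Dset n`. -/
theorem stmt5 (n : ℕ) :
    sSup {k : ℕ | ∃ B : Set (List Bool),
        (∀ x ∈ B, x.length = n) ∧ B.Pairwise (Fdist n) ∧ B.ncard = k} =
    sSup {k : ℕ | ∃ B : Set (List Bool),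
        B ⊆ Dset n ∧ B.Pairwise (Fdist n) ∧ B.ncard = k} := by
  congr 1
  ext k
  simp only [Set.mem_setOf_eq]
  constructor
  · rintro ⟨B, hlen, hpw, hcard⟩
    -- transfer of Fdist along g
    have key : ∀ x y, Fdist n x y → Fdist n (g x) (g y) := by
      rintro x y ⟨i, hi, hne, hx, hy⟩
      exact ⟨i, hi, by rw [g_bpair x i hx, g_bpair y i hy]; exact hne,
        by rw [g_bpair x i hx]; exact hx, by rw [g_bpair y i hy]; exact hy⟩
    have hinj : Set.InjOn g B := by
      intro x hx y hy hxy
      by_contra hne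
      obtain ⟨i, _, hpne, hpx, hpy⟩ := key x y (hpw hx hy hne)
      exact hpne (by rw [hxy])
    refine ⟨g '' B, ?_, ?_, ?_⟩
    · rintro _ ⟨x, hx, rfl⟩
      exact ⟨by rw [g_length]; exact hlen x hx, g_no111 x⟩
    · rintro _ ⟨x, hx, rfl⟩ _ ⟨y, hy, rfl⟩ hne
      have hxy : x ≠ y := fun h => hne (by rw [h])
      exact key x y (hpw hx hy hxy)
    · rw [Set.ncard_image_of_injOn hinj]; exact hcard
  · rintro ⟨B, hsub, hpw, hcard⟩
    exact ⟨B, fun x hx => (hsub hx).1, hpw, hcard⟩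
end

section
/- Let C_n be the set of binary strings of length n starting with 0 in which every maximal run of 1's has odd length. Then any two distinct strings in C_n are G-distinguishable, where G is the complete graph on vertex set {00, 01, 11}. -/
/-- Every maximal run of 1's in `x` has odd length. -/
def OddRuns (x : List Bool) : Prop :=
  ∀ i l : ℕ, 0 < l → i + l ≤ x.length →
    (∀ j < l, x.getD (i + j) false = true) →
    (i = 0 ∨ x.getD (i - 1) false = false) →
    (i + l = x.length ∨ x.getD (i + l) false = false) →
    Odd l

/-- `G`-distinguishability: `G` is the complete graph on `{00, 01, 11}`. -/
def Gdist (n : ℕ) (x y : List Bool) : Prop :=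
  ∃ i, i + 1 < n ∧ bpair x i ≠ bpair y i ∧
    bpair x i ≠ (true, false) ∧ bpair y i ≠ (true, false)

lemma getD_head {x : List Bool} (h : x.head? = some false) : x.getD 0 false = false := by
  cases x <;> simp_all

lemma gdist_symm {n : ℕ} {x y : List Bool} (h : Gdist n y x) : Gdist n x y := by
  obtain ⟨i, h1, h2, h3, h4⟩ := h; exact ⟨i, h1, Ne.symm h2, h4, h3⟩

lemma main_lemma (n : ℕ) (x y : List Bool) (hx : x.length = n) (hy : y.length = n)
    (hx0 : x.getD 0 false = false)
    (hxodd : OddRuns x) (hyodd : OddRuns y) (k : ℕ) (hk : k < n)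
    (hagree : ∀ j, j < k → x.getD j false = y.getD j false)
    (hxk : x.getD k false = true) (hyk : y.getD k false = false) :
    Gdist n x y := by
  classical
  have hk1 : 1 ≤ k := by
    rcases Nat.eq_zero_or_pos k with rfl | h
    · rw [hx0] at hxk; exact absurd hxk (by simp)
    · exact h
  have hk1' : k - 1 + 1 = k := by omega
  cases hc : x.getD (k-1) false with
  | false =>
    have hyc : y.getD (k-1) false = false := by
      rw [← hagree (k-1) (by omega)]; exact hc
    refine ⟨k-1, by omega, ?_, ?_, ?_⟩ <;>
      simp only [bpair, hk1', hc, hxk, hyk, hyc, ne_eq, Prod.mk.injEq] <;> simp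
  | true =>
    cases hd : x.getD (k+1) false with
    | true =>
      have hk2 : k + 1 < n := by
        by_contra h
        have : x.getD (k+1) false = false := List.getD_eq_default _ _ (by omega)
        rw [this] at hd; exact absurd hd (by simp)
      refine ⟨k, hk2, ?_, ?_, ?_⟩ <;>
        simp only [bpair, hxk, hyk, hd, ne_eq, Prod.mk.injEq] <;> simp
    | false =>
      exfalso
      have hQex : ∃ s, ∀ j, s ≤ j → j < k → x.getD j false = true :=
        ⟨k, fun j h1 h2 => absurd h1 (by omega)⟩
      have hdec : DecidablePred (fun s => ∀ j, s ≤ j → j < k → x.getD j false = true) :=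
        fun _ => Classical.dec _
      set s := Nat.find hQex with hs
      have hQs : ∀ j, s ≤ j → j < k → x.getD j false = true := Nat.find_spec hQex
      have hsk : s ≤ k - 1 := by
        apply Nat.find_le
        intro j h1 h2
        have : j = k - 1 := by omega
        rw [this]; exact hc
      have hs1 : 1 ≤ s := by
        by_contra h
        have hs0 : s = 0 := by omega
        have := hQs 0 (by omega) (by omega)
        rw [hx0] at this; exact absurd this (by simp)
      have hsf : x.getD (s-1) false = false := by
        have hmin := Nat.find_min hQex (show s - 1 < s by omega)
        push_neg at hmin
        obtain ⟨j, hj1, hj2, hj3⟩ := hmin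
        have : j = s - 1 := by
          by_contra hne
          exact hj3 (hQs j (by omega) hj2)
        rw [← this]
        cases hval : x.getD j false
        · rfl
        · exact absurd hval hj3
      have hox : Odd (k + 1 - s) := by
        apply hxodd s (k + 1 - s) (by omega) (by omega)
        · intro j hj
          rcases Nat.lt_or_ge (s + j) k with h | h
          · exact hQs (s + j) (by omega) h
          · rw [show s + j = k from by omega]; exact hxk
        · exact Or.inr hsf
        · exact Or.inr (by rw [show s + (k + 1 - s) = k + 1 from by omega]; exact hd)
      have hoy : Odd (k - s) := by
        apply hyodd s (k - s) (by omega) (by omega)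
        · intro j hj
          rw [← hagree (s + j) (by omega)]
          exact hQs (s + j) (by omega) (by omega)
        · exact Or.inr (by rw [← hagree (s-1) (by omega)]; exact hsf)
        · exact Or.inr (by rw [show s + (k - s) = k from by omega]; exact hyk)
      obtain ⟨a, ha⟩ := hox
      obtain ⟨b, hb⟩ := hoy
      omega

/-- Any two distinct binary strings of length `n` starting with 0 all of whose maximal
runs of 1's have odd length are `G`-distinguishable. -/
theorem stmt6 (n : ℕ) (x y : List Bool)
    (hx : x.length = n) (hy : y.length = n)
    (hx0 : x.head? = some false) (hy0 : y.head? = some false)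
    (hxodd : OddRuns x) (hyodd : OddRuns y) (hxy : x ≠ y) :
    Gdist n x y := by
  classical
  have hne : ∃ k, x.getD k false ≠ y.getD k false := by
    by_contra h
    push_neg at h
    apply hxy
    apply List.ext_getElem (hx.trans hy.symm)
    intro i h1 h2
    have := h i
    rwa [List.getD_eq_getElem x false h1, List.getD_eq_getElem y false h2] at this
  set k := Nat.find hne with hkdef
  have hk : x.getD k false ≠ y.getD k false := Nat.find_spec hne
  have hag : ∀ j, j < k → x.getD j false = y.getD j false := by
    intro j hj
    have := Nat.find_min hne hj
    simpa using this
  have hkn : k < n := by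
    by_contra h
    push_neg at h
    rw [List.getD_eq_default _ _ (by omega), List.getD_eq_default _ _ (by omega)] at hk
    exact hk rfl
  cases hxk : x.getD k false <;> cases hyk : y.getD k false
  · exact absurd (hxk.trans hyk.symm) hk
  · exact gdist_symm (main_lemma n y x hy hx (getD_head hy0) hyodd hxodd k hkn
      (fun j hj => (hag j hj).symm) hyk hxk)
  · exact main_lemma n x y hx hy (getD_head hx0) hxodd hyodd k hkn hag hxk hyk
  · exact absurd (hxk.trans hyk.symm) hk
end

section
/- Define f_n : {0,1}^n → {0,1}^n by replacing, in every maximal run of 1's of even length, the last 1 of that run by a 0. Then f_n(x) always has all runs of 1's of odd length, and if f_n(x) = f_n(y) for distinct x, y ∈ {0,1}^n, then x and y are NOT G-distinguishable, where G is the complete graph on {00, 01, 11}. -/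
/-- Length of the run of consecutive 1's of `x` ending at position `i`. -/
def runLen (x : List Bool) : ℕ → ℕ
  | 0 => if x.getD 0 false then 1 else 0
  | i + 1 => if x.getD (i + 1) false then runLen x i + 1 else 0

/-- `fG x` replaces, in every maximal run of 1's of even length, the last 1 by a 0. -/
def fG (x : List Bool) : List Bool :=
  (List.range x.length).map fun i =>
    if x.getD i false = true ∧ (i + 1 = x.length ∨ x.getD (i + 1) false = false) ∧
        Even (runLen x i) then false
    else x.getD i false

/-! `fG` only turns 1's into 0's, namely the last 1 of each even run. So a run of 1's of `fG x`
is either a whole odd run of `x`, or an even run of `x` cut short by one, and is odd either way.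
If `fG x = fG y` and `x k = 1 ≠ y k`, then `k` is the last 1 of an even run of `x`: so `x` shows
the pair 10 at `k`, and `x (k - 1) = 1`, so if `y` agrees with `x` at `k - 1` it shows 10 there.
Hence at every window where `x` and `y` differ, one of them shows 10. -/

def EndsEvenRun (x : List Bool) (i : ℕ) : Prop :=
  x.getD i false = true ∧ (i + 1 = x.length ∨ x.getD (i + 1) false = false) ∧ Even (runLen x i)

section runLen

variable {x : List Bool} {i : ℕ}

theorem runLen_of_getD_eq_false (h : x.getD i false = false) : runLen x i = 0 := by
  cases i <;> simp only [runLen, h, Bool.false_eq_true, if_false]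

theorem runLen_succ_of_getD_eq_true (h : x.getD (i + 1) false = true) :
    runLen x (i + 1) = runLen x i + 1 := by
  simp only [runLen, h, if_true]

theorem runLen_add_of_run {j : ℕ} (hstart : i = 0 ∨ x.getD (i - 1) false = false)
    (hrun : ∀ k ≤ j, x.getD (i + k) false = true) : runLen x (i + j) = j + 1 := by
  induction j with
  | zero =>
    have hi := hrun 0 le_rfl
    rcases i with _ | i
    · simpa [runLen] using hi
    · have hprev : x.getD i false = false := by simpa using hstart
      rw [Nat.add_zero, runLen_succ_of_getD_eq_true hi, runLen_of_getD_eq_false hprev]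
  | succ j ih =>
    have hlast : x.getD (i + j + 1) false = true := hrun (j + 1) le_rfl
    rw [← Nat.add_assoc, runLen_succ_of_getD_eq_true hlast, ih fun k hk => hrun k (by omega)]

theorem getD_eq_true_of_even_runLen_succ (h : x.getD (i + 1) false = true)
    (heven : Even (runLen x (i + 1))) : x.getD i false = true := by
  by_contra hi
  rw [runLen_succ_of_getD_eq_true h, runLen_of_getD_eq_false (by simpa using hi)] at heven
  exact Nat.not_even_one heven

end runLen

section fG

variable {x y : List Bool} {i : ℕ}

theorem fG_length (x : List Bool) : (fG x).length = x.length := by simp [fG]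

theorem getD_fG_eq_true_iff (x : List Bool) (i : ℕ) :
    (fG x).getD i false = true ↔ x.getD i false = true ∧ ¬ EndsEvenRun x i := by
  rcases lt_or_ge i x.length with hi | hi
  · rw [List.getD_eq_getElem _ _ (by rwa [fG_length])]
    simp only [fG, List.getElem_map, List.getElem_range, EndsEvenRun]
    split_ifs with hend
    · simp only [false_iff]
      tauto
    · tauto
  · simp [hi, fG_length]

theorem getD_fG_of_getD_succ_eq_true (h : x.getD (i + 1) false = true) :
    (fG x).getD i false = x.getD i false := by
  have hi : i + 1 < x.length := by
    by_contra hi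
    rw [List.getD_eq_default _ _ (by omega)] at h
    exact Bool.false_ne_true h
  have hend : ¬ EndsEvenRun x i := fun ⟨_, hend, _⟩ => by
    rcases hend with hend | hend
    · omega
    · exact Bool.false_ne_true (hend ▸ h)
  rw [Bool.eq_iff_iff, getD_fG_eq_true_iff]
  tauto

theorem odd_runLen_of_getD_fG (h : (fG x).getD i false = true)
    (hnext : (fG x).getD (i + 1) false = false) : Odd (runLen x i) := by
  obtain ⟨hxi, hi⟩ := (getD_fG_eq_true_iff x i).1 h
  rw [← Nat.not_even_iff_odd]
  intro heven
  cases hx : x.getD (i + 1) false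
  · exact hi ⟨hxi, Or.inr hx, heven⟩
  · have hend : EndsEvenRun x (i + 1) := by
      by_contra hend
      rw [← Bool.not_eq_true, getD_fG_eq_true_iff] at hnext
      exact hnext ⟨hx, hend⟩
    have hodd := hend.2.2
    rw [runLen_succ_of_getD_eq_true hx, Nat.even_add_one] at hodd
    exact hodd heven

theorem oddRuns_fG (x : List Bool) : OddRuns (fG x) := by
  intro i l hl _ hrun hstart hend
  have hxrun : ∀ j < l, x.getD (i + j) false = true := fun j hj =>
    ((getD_fG_eq_true_iff x _).1 (hrun j hj)).1
  have hxstart : i = 0 ∨ x.getD (i - 1) false = false := by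
    rcases i with _ | i
    · exact Or.inl rfl
    · right
      rw [Nat.add_sub_cancel, ← getD_fG_of_getD_succ_eq_true (hxrun 0 hl)]
      simpa using hstart
  have hnext : (fG x).getD (i + (l - 1) + 1) false = false := by
    rw [show i + (l - 1) + 1 = i + l by omega]
    exact hend.elim (fun hend => List.getD_eq_default _ _ hend.ge) id
  have hodd := odd_runLen_of_getD_fG (hrun (l - 1) (by omega)) hnext
  rwa [runLen_add_of_run hxstart (fun k hk => hxrun k (by omega)), Nat.sub_add_cancel hl] at hodd

theorem endsEvenRun_of_fG_eq (h : fG x = fG y) (hx : x.getD i false = true)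
    (hy : y.getD i false = false) : EndsEvenRun x i := by
  by_contra hend
  have hfx := (getD_fG_eq_true_iff x i).2 ⟨hx, hend⟩
  rw [h, getD_fG_eq_true_iff, hy] at hfx
  exact Bool.false_ne_true hfx.1

theorem getD_eq_true_of_fG_eq (h : fG x = fG y) (hi : i + 1 < x.length)
    (hx10 : bpair x i ≠ (true, false)) (hx : x.getD i false = true) :
    y.getD i false = true := by
  by_contra hy
  rw [Bool.not_eq_true] at hy
  obtain ⟨-, hend, -⟩ := endsEvenRun_of_fG_eq h hx hy
  have hnext : x.getD (i + 1) false = false := hend.resolve_left (by omega)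
  exact hx10 (by rw [bpair, hx, hnext])

theorem getD_succ_eq_true_of_fG_eq (h : fG x = fG y) (hy10 : bpair y i ≠ (true, false))
    (hxy : x.getD i false = y.getD i false) (hx : x.getD (i + 1) false = true) :
    y.getD (i + 1) false = true := by
  by_contra hy
  rw [Bool.not_eq_true] at hy
  obtain ⟨-, -, heven⟩ := endsEvenRun_of_fG_eq h hx hy
  have hxi := getD_eq_true_of_even_runLen_succ hx heven
  rw [hxy] at hxi
  exact hy10 (by rw [bpair, hxi, hy])

theorem not_gdist_of_fG_eq {n : ℕ} (hx : x.length = n) (hy : y.length = n) (h : fG x = fG y) :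
    ¬ Gdist n x y := by
  rintro ⟨i, hi, hne, hx10, hy10⟩
  have h0 : x.getD i false = y.getD i false := Bool.eq_iff_iff.2
    ⟨getD_eq_true_of_fG_eq h (by omega) hx10, getD_eq_true_of_fG_eq h.symm (by omega) hy10⟩
  have h1 : x.getD (i + 1) false = y.getD (i + 1) false := Bool.eq_iff_iff.2
    ⟨getD_succ_eq_true_of_fG_eq h hy10 h0, getD_succ_eq_true_of_fG_eq h.symm hx10 h0.symm⟩
  exact hne (by rw [bpair, bpair, h0, h1])

end fG

/-- `fG` always produces a string all of whose runs of 1's are odd, and strings identified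
by `fG` are not `G`-distinguishable. -/
theorem stmt7 (n : ℕ) :
    (∀ x : List Bool, x.length = n → OddRuns (fG x)) ∧
    (∀ x y : List Bool, x.length = n → y.length = n → x ≠ y → fG x = fG y →
      ¬ Gdist n x y) :=
  ⟨fun x _ => oddRuns_fG x, fun _ _ hx hy _ h => not_gdist_of_fG_eq hx hy h⟩
end

section
/- The maximum size M(G,n) of a pairwise G-distinguishable code in {0,1}^n, where G is the complete graph on {00, 01, 11}, satisfies M(G,n) ≤ |B_n|, where B_n is the set of binary strings of length n all of whose maximal runs of 1's have odd length. -/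
/-- `Bset n`: binary strings of length `n` all of whose maximal runs of 1's are odd. -/
def Bset (n : ℕ) : Set (List Bool) := {x | x.length = n ∧ OddRuns x}

/-! Each even run of 1's loses its last 1. This is injective on a `G`-distinguishable code: at a
position where neither string has the pair `10`, the image keeps the first bit, and keeps the
whole pair when that bit is `0`; so two strings with the same image agree on every such pair. -/

lemma oddRuns_nil : OddRuns [] := by
  intro i l hl hle
  simp at hle
  omega

lemma oddRuns_singleton_false : OddRuns [false] := by
  intro i l hl hle hrun
  have := hrun 0 hl
  simp at hle
  obtain rfl : i = 0 := by omega
  simp at this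

lemma oddRuns_replicate_true {m : ℕ} (hm : m = 0 ∨ Odd m) : OddRuns (List.replicate m true) := by
  intro i l hl hle hrun hleft hright
  simp only [List.length_replicate] at hle hright
  obtain rfl : i = 0 := hleft.resolve_right fun h => by
    rw [List.getD_replicate _ (by omega)] at h
    exact Bool.noConfusion h
  obtain rfl : l = m := by
    by_contra hne
    rw [List.getD_replicate _ (by omega)] at hright
    exact Bool.noConfusion (hright.resolve_left (by omega))
  exact hm.resolve_left (by omega)

lemma oddRuns_append {u z : List Bool} (hseam : u.getLastD false = false ∨ z.headD false = false)
    (hu : OddRuns u) (hz : OddRuns z) : OddRuns (u ++ z) := by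
  intro i l hl hle hrun hleft hright
  have hgetL : ∀ j < u.length, (u ++ z).getD j false = u.getD j false :=
    List.getD_append _ _ _
  have hgetR : ∀ j, u.length ≤ j → (u ++ z).getD j false = z.getD (j - u.length) false :=
    List.getD_append_right _ _ _
  rw [List.length_append] at hle hright
  rcases le_or_gt (i + l) u.length with hin | hout
  · refine hu i l hl hin (fun j hj => ?_) ?_ ?_
    · rw [← hgetL _ (by omega)]
      exact hrun j hj
    · exact hleft.imp_right fun h => by rwa [hgetL _ (by omega)] at h
    · rcases hin.eq_or_lt with h | h
      · exact .inl h
      · exact .inr (by rw [← hgetL _ h]; exact hright.resolve_left (by omega))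
  rcases le_or_gt u.length i with hin | hcross
  · refine hz (i - u.length) l hl (by omega) (fun j hj => ?_) ?_ ?_
    · rw [← hrun j hj, hgetR _ (by omega), show i + j - u.length = i - u.length + j by omega]
    · rcases hin.eq_or_lt with h | h
      · exact .inl (by omega)
      · have h' := hleft.resolve_left (by omega)
        rw [hgetR _ (by omega), show i - 1 - u.length = i - u.length - 1 by omega] at h'
        exact .inr h'
    · refine hright.imp (by omega) fun h => ?_
      rwa [hgetR _ (by omega), show i + l - u.length = i - u.length + l by omega] at h
  · have hlast := hrun (u.length - 1 - i) (by omega)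
    have hfirst := hrun (u.length - i) (by omega)
    rw [hgetL _ (by omega), show i + (u.length - 1 - i) = u.length - 1 by omega] at hlast
    rw [hgetR _ (by omega), show i + (u.length - i) - u.length = 0 by omega] at hfirst
    rw [List.getLastD_eq_getLast?, List.getLast?_eq_getElem?] at hseam
    rw [List.getD_eq_getElem?_getD] at hlast hfirst
    cases z <;> simp_all

lemma oddRuns_replicate_true_append_false_cons {m : ℕ} (hm : m = 0 ∨ Odd m) {s : List Bool}
    (hs : OddRuns s) : OddRuns (List.replicate m true ++ false :: s) :=
  oddRuns_append (.inr rfl) (oddRuns_replicate_true hm)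
    (oddRuns_append (u := [false]) (.inl rfl) oddRuns_singleton_false hs)

lemma Bset_finite (n : ℕ) : (Bset n).Finite :=
  (List.finite_length_eq Bool n).subset fun _ hx => hx.1

/-- The flag records whether the 1's read so far in the current run are odd in number; a 1 that
ends a run becomes `!odd`, i.e. `0` exactly when the run has even length. -/
def shortenEvenRunsAux : Bool → List Bool → List Bool
  | _, [] => []
  | _, false :: t => false :: shortenEvenRunsAux false t
  | odd, true :: t => (t.headD false || !odd) :: shortenEvenRunsAux (!odd) t

def shortenEvenRuns (x : List Bool) : List Bool := shortenEvenRunsAux false x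

lemma length_shortenEvenRunsAux : ∀ (odd : Bool) (x : List Bool),
    (shortenEvenRunsAux odd x).length = x.length
  | _, [] => rfl
  | _, false :: t => congrArg (· + 1) (length_shortenEvenRunsAux false t)
  | odd, true :: t => congrArg (· + 1) (length_shortenEvenRunsAux (!odd) t)

lemma getD_zero_shortenEvenRunsAux_false : ∀ x : List Bool,
    (shortenEvenRunsAux false x).getD 0 false = x.getD 0 false
  | [] => rfl
  | false :: _ => rfl
  | true :: _ => by simp [shortenEvenRunsAux]

lemma getD_shortenEvenRunsAux_of_bpair_ne : ∀ (odd : Bool) (x : List Bool) (i : ℕ),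
    bpair x i ≠ (true, false) → (shortenEvenRunsAux odd x).getD i false = x.getD i false
  | _, [], _, _ => rfl
  | _, false :: _, 0, _ => rfl
  | odd, true :: t, 0, h => by cases t <;> simp_all [bpair, shortenEvenRunsAux]
  | _, false :: t, i + 1, h => getD_shortenEvenRunsAux_of_bpair_ne false t i h
  | odd, true :: t, i + 1, h => getD_shortenEvenRunsAux_of_bpair_ne (!odd) t i h

lemma bpair_shortenEvenRunsAux_of_getD_eq_false : ∀ (odd : Bool) (x : List Bool) (i : ℕ),
    x.getD i false = false → bpair (shortenEvenRunsAux odd x) i = bpair x i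
  | _, [], _, _ => rfl
  | _, false :: t, 0, _ => by
    simpa [bpair, shortenEvenRunsAux] using getD_zero_shortenEvenRunsAux_false t
  | _, true :: _, 0, h => Bool.noConfusion h
  | _, false :: t, i + 1, h => bpair_shortenEvenRunsAux_of_getD_eq_false false t i h
  | odd, true :: t, i + 1, h => bpair_shortenEvenRunsAux_of_getD_eq_false (!odd) t i h

lemma bpair_eq_of_shortenEvenRunsAux_eq {odd odd' : Bool} {x y : List Bool}
    (h : shortenEvenRunsAux odd x = shortenEvenRunsAux odd' y) {i : ℕ}
    (hx : bpair x i ≠ (true, false)) (hy : bpair y i ≠ (true, false)) : bpair x i = bpair y i := by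
  have hfst : x.getD i false = y.getD i false := by
    rw [← getD_shortenEvenRunsAux_of_bpair_ne odd x i hx,
      ← getD_shortenEvenRunsAux_of_bpair_ne odd' y i hy, h]
  cases hxi : x.getD i false
  · rw [← bpair_shortenEvenRunsAux_of_getD_eq_false odd x i hxi,
      ← bpair_shortenEvenRunsAux_of_getD_eq_false odd' y i (hfst ▸ hxi), h]
  · simp_all [bpair]

/-- `replicate m true ++ shortenEvenRunsAux (decide (Odd m)) x` is the output once `m` 1's of a
run have been read; the hypothesis singles out the states that actually occur. -/
lemma oddRuns_replicate_true_append_shortenEvenRunsAux : ∀ (x : List Bool) (m : ℕ),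
    (m = 0 ∨ Odd m ∨ x.headD false = true) →
      OddRuns (List.replicate m true ++ shortenEvenRunsAux (decide (Odd m)) x)
  | [], m, hm => by
    simpa [shortenEvenRunsAux] using oddRuns_replicate_true (hm.imp_right (·.resolve_right (by simp)))
  | false :: t, m, hm =>
    oddRuns_replicate_true_append_false_cons (by simpa using hm)
      (by simpa using oddRuns_replicate_true_append_shortenEvenRunsAux t 0 (.inl rfl))
  | true :: t, m, hm => by
    have ih := oddRuns_replicate_true_append_shortenEvenRunsAux t
    have hparity : (!decide (Odd m)) = decide (Odd (m + 1)) := by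
      simp [Nat.odd_add_one, ← Nat.not_even_iff_odd]
    simp only [shortenEvenRunsAux, hparity]
    by_cases hcont : (t.headD false || decide (Odd (m + 1))) = true
    · rw [hcont, show ∀ s, List.replicate m true ++ true :: s = List.replicate (m + 1) true ++ s by
        simp [List.replicate_succ']]
      rw [Bool.or_eq_true, decide_eq_true_iff] at hcont
      exact ih (m + 1) (.inr hcont.symm)
    · obtain ⟨-, hodd⟩ : t.headD false = false ∧ Odd m := by
        simpa [Nat.odd_add_one, ← Nat.not_even_iff_odd] using hcont
      rw [Bool.eq_false_iff.mpr hcont, decide_eq_false (by simpa [Nat.odd_add_one] using hodd)]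
      exact oddRuns_replicate_true_append_false_cons (.inr hodd) (by simpa using ih 0 (.inl rfl))

lemma oddRuns_shortenEvenRuns (x : List Bool) : OddRuns (shortenEvenRuns x) := by
  simpa [shortenEvenRuns] using oddRuns_replicate_true_append_shortenEvenRunsAux x 0 (.inl rfl)

lemma mapsTo_shortenEvenRuns {n : ℕ} {B : Set (List Bool)} (hB : ∀ x ∈ B, x.length = n) :
    Set.MapsTo shortenEvenRuns B (Bset n) := fun x hx =>
  ⟨(length_shortenEvenRunsAux false x).trans (hB x hx), oddRuns_shortenEvenRuns x⟩

lemma injOn_shortenEvenRuns {n : ℕ} {B : Set (List Bool)} (hdist : B.Pairwise (Gdist n)) :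
    Set.InjOn shortenEvenRuns B := by
  intro x hx y hy hxy
  by_contra hne
  obtain ⟨i, -, hpair, hx10, hy10⟩ := hdist hx hy hne
  exact hpair (bpair_eq_of_shortenEvenRunsAux_eq hxy hx10 hy10)

/-- Every pairwise `G`-distinguishable code of length `n` has size at most `|B_n|`. -/
theorem stmt9 (n : ℕ) (B : Set (List Bool)) (hB : ∀ x ∈ B, x.length = n)
    (hdist : B.Pairwise (Gdist n)) :
    B.ncard ≤ (Bset n).ncard :=
  Set.ncard_le_ncard_of_injOn shortenEvenRuns (mapsTo_shortenEvenRuns hB)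
    (injOn_shortenEvenRuns hdist) (Bset_finite n)
end

section
/- Let g : {0,1}^2 → {0,1} be defined by g(0,0) = 0 and g = 1 otherwise, and define f_n : {0,1}^n → {0,1}^n by (f_n(x))_1 = x_1 and (f_n(x))_i = g(x_{i-1}, x_i) for i > 1. Then for strings x, y ∈ {0,1}^n both starting with 0, x and y are L-distinguishable if and only if f_n(x) ≠ f_n(y), where L is the star graph on {0,1}^2 with all three edges incident to 00. -/
/-- `g(0,0) = 0` and `g = 1` otherwise. -/
def gL (a b : Bool) : Bool := a || b

/-- `(fL x)_0 = x_0` and `(fL x)_i = gL (x_{i-1}) (x_i)` for `i > 0`. -/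
def fL (x : List Bool) : List Bool :=
  (List.range x.length).map fun i =>
    if i = 0 then x.getD 0 false else gL (x.getD (i - 1) false) (x.getD i false)

/-- `L`-distinguishability: `L` is the star on `{0,1}²` with all edges incident to `00`:
one consecutive pair is `00` and the other is not. -/
def Ldist (n : ℕ) (x y : List Bool) : Prop :=
  ∃ i, i + 1 < n ∧
    ((bpair x i = (false, false) ∧ bpair y i ≠ (false, false)) ∨
     (bpair y i = (false, false) ∧ bpair x i ≠ (false, false)))

lemma fL_length (x : List Bool) : (fL x).length = x.length := by simp [fL]

lemma fL_getElem (x : List Bool) (j : ℕ) (h : j < (fL x).length) :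
    (fL x)[j] = if j = 0 then x.getD 0 false
      else gL (x.getD (j - 1) false) (x.getD j false) := by
  simp [fL]

lemma bpair_ff (x : List Bool) (i : ℕ) :
    bpair x i = (false, false) ↔ (x.getD i false || x.getD (i+1) false) = false := by
  simp [bpair, Prod.ext_iff]

/-- For strings of length `n` starting with 0, `L`-distinguishability is equivalent to
having distinct images under `fL`. -/
theorem stmt10 (n : ℕ) (x y : List Bool) (hx : x.length = n) (hy : y.length = n)
    (hx0 : x.head? = some false) (hy0 : y.head? = some false) :
    Ldist n x y ↔ fL x ≠ fL y := by
  constructor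
  · rintro ⟨i, hi, h⟩ heq
    have hlt : i + 1 < (fL x).length := by rw [fL_length, hx]; exact hi
    have hlt' : i + 1 < (fL y).length := by rw [fL_length, hy]; exact hi
    have hval : (fL x)[i+1] = (fL y)[i+1] := by simp only [heq]
    rw [fL_getElem, fL_getElem] at hval
    simp only [Nat.add_sub_cancel, gL, if_neg (Nat.succ_ne_zero i)] at hval
    rcases h with ⟨h1, h2⟩ | ⟨h1, h2⟩ <;>
    · rw [bpair_ff] at h1
      rw [Ne, bpair_ff, Bool.not_eq_false] at h2
      rw [h1, h2] at hval
      exact Bool.false_ne_true (hval ▸ rfl)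
  · intro hne
    by_contra hL
    apply hne
    unfold Ldist at hL
    push_neg at hL
    apply List.ext_getElem (by rw [fL_length, fL_length, hx, hy])
    intro j h1 h2
    rw [fL_getElem, fL_getElem]
    rcases j with _ | k
    · simp only [if_pos rfl]
      cases x with
      | nil => simp at hx0
      | cons a t =>
        cases y with
        | nil => simp at hy0
        | cons b s =>
          simp only [List.head?_cons, Option.some.injEq] at hx0 hy0
          simp [hx0, hy0]
    · have hk : k + 1 < n := by rw [fL_length, hx] at h1; exact h1
      have := hL k hk
      obtain ⟨hA, hB⟩ := this
      simp only [if_neg (Nat.succ_ne_zero k), Nat.add_sub_cancel, gL]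
      simp only [bpair_ff] at hA hB
      rcases Bool.eq_false_or_eq_true (x.getD k false || x.getD (k+1) false) with h' | h'
      · rcases Bool.eq_false_or_eq_true (y.getD k false || y.getD (k+1) false) with h'' | h''
        · exact h'.trans h''.symm
        · exact absurd (hB h'') (by rw [h']; simp)
      · exact h'.trans (hA h').symm
end

section
/- Let g : {0,1}^2 → {0,1} with g(0,1) = 1 and g = 0 otherwise, and define f_n : {0,1}^n → {0,1}^n by (f_n(x))_1 = x_1 and (f_n(x))_i = g(x_{i-1}, x_i) for i > 1. Then: (a) f_n is injective on any pairwise Q-distinguishable code, where Q is the star on {0,1}^2 with all edges incident to 01; (b) every value f_n(x) is a binary string with no two consecutive 1's among coordinates 2,...,n. Consequently M(Q,n) ≤ 2·F_n where F_n is the number of binary strings of length n-1 with no two consecutive 1's. -/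
/-- `g(0,1) = 1` and `g = 0` otherwise. -/
def gQ (a b : Bool) : Bool := !a && b

/-- `(fQ x)_0 = x_0` and `(fQ x)_i = gQ (x_{i-1}) (x_i)` for `i > 0`. -/
def fQ (x : List Bool) : List Bool :=
  (List.range x.length).map fun i =>
    if i = 0 then x.getD 0 false else gQ (x.getD (i - 1) false) (x.getD i false)

/-- `Q`-distinguishability: `Q` is the star on `{0,1}²` with all edges incident to `01`:
one consecutive pair is `01` and the other is not. -/
def Qdist (n : ℕ) (x y : List Bool) : Prop :=
  ∃ i, i + 1 < n ∧
    ((bpair x i = (false, true) ∧ bpair y i ≠ (false, true)) ∨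
     (bpair y i = (false, true) ∧ bpair x i ≠ (false, true)))

lemma tail_getD (l : List Bool) (i : ℕ) (d : Bool) : l.tail.getD i d = l.getD (i+1) d := by
  cases l <;> simp [List.getD]

lemma fQ_length (x : List Bool) : (fQ x).length = x.length := by simp [fQ]

lemma fQ_getD (x : List Bool) (i : ℕ) (hi : i < x.length) :
    (fQ x).getD i false =
      if i = 0 then x.getD 0 false else gQ (x.getD (i-1) false) (x.getD i false) := by
  simp [fQ, List.getD_eq_getElem?_getD, List.getElem?_range, hi]

lemma gQ_eq_true (a b : Bool) : gQ a b = true ↔ a = false ∧ b = true := by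
  cases a <;> cases b <;> simp [gQ]

lemma fQ_getD_succ (x : List Bool) (i : ℕ) (hi : i + 1 < x.length) :
    (fQ x).getD (i+1) false = gQ (x.getD i false) (x.getD (i+1) false) := by
  rw [fQ_getD x (i+1) hi]; simp

lemma gQ_bpair (x : List Bool) (i : ℕ) :
    gQ (x.getD i false) (x.getD (i+1) false) = true ↔ bpair x i = (false, true) := by
  simp [bpair, gQ_eq_true, Prod.ext_iff]

/-- `fQ` is injective on any pairwise `Q`-distinguishable code, its values have no two
consecutive 1's among coordinates `2, …, n` (1-indexed), and hence `M(Q,n) ≤ 2·F_n` where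
`F_n` is the number of binary strings of length `n-1` with no two consecutive 1's. -/
theorem stmt11 (n : ℕ) (B : Set (List Bool)) (hB : ∀ x ∈ B, x.length = n)
    (hdist : B.Pairwise (Qdist n)) :
    Set.InjOn fQ B ∧
    (∀ x : List Bool, x.length = n → ∀ i, 1 ≤ i → i + 1 < n →
      ¬ ((fQ x).getD i false = true ∧ (fQ x).getD (i + 1) false = true)) ∧
    B.ncard ≤ 2 * {z : List Bool | z.length = n - 1 ∧
      ∀ i, i + 1 < n - 1 → ¬ (z.getD i false = true ∧ z.getD (i + 1) false = true)}.ncard := by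
  have hinj : Set.InjOn fQ B := by
    intro x hx y hy hfxy
    by_contra hne
    obtain ⟨i, hin, hcase⟩ := hdist hx hy hne
    have hxl : i + 1 < x.length := by rw [hB x hx]; exact hin
    have hyl : i + 1 < y.length := by rw [hB y hy]; exact hin
    have hx1 := fQ_getD_succ x i hxl
    have hy1 := fQ_getD_succ y i hyl
    rw [hfxy] at hx1
    have heq : gQ (x.getD i false) (x.getD (i+1) false)
        = gQ (y.getD i false) (y.getD (i+1) false) := hx1.symm.trans hy1
    rcases hcase with ⟨h1, h2⟩ | ⟨h1, h2⟩
    · have := (gQ_bpair x i).mpr h1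
      rw [this] at heq
      exact h2 ((gQ_bpair y i).mp heq.symm)
    · have := (gQ_bpair y i).mpr h1
      rw [this] at heq
      exact h2 ((gQ_bpair x i).mp heq)
  have hnoconsec : ∀ x : List Bool, x.length = n → ∀ i, 1 ≤ i → i + 1 < n →
      ¬ ((fQ x).getD i false = true ∧ (fQ x).getD (i + 1) false = true) := by
    rintro x hxn i h1 h2 ⟨ha, hb⟩
    obtain ⟨j, rfl⟩ : ∃ j, i = j + 1 := ⟨i - 1, by omega⟩
    rw [fQ_getD_succ x j (by omega)] at ha
    rw [fQ_getD_succ x (j+1) (by omega)] at hb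
    have hA := (gQ_eq_true _ _).mp ha
    have hB2 := (gQ_eq_true _ _).mp hb
    rw [hA.2] at hB2
    exact absurd hB2.1 (by simp)
  refine ⟨hinj, hnoconsec, ?_⟩
  set Z := {z : List Bool | z.length = n - 1 ∧
      ∀ i, i + 1 < n - 1 → ¬ (z.getD i false = true ∧ z.getD (i + 1) false = true)} with hZ
  have hZfin : Z.Finite := (List.finite_length_eq Bool (n-1)).subset (fun z hz => hz.1)
  rcases Nat.eq_zero_or_pos n with hn0 | hn1
  · -- n = 0
    have hBsub : B ⊆ {([] : List Bool)} := by
      intro x hx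
      have := hB x hx
      rw [hn0] at this
      simp [List.length_eq_zero_iff.mp this]
    have h1 : B.ncard ≤ 1 := by
      calc B.ncard ≤ ({([] : List Bool)} : Set _).ncard :=
            Set.ncard_le_ncard hBsub (Set.finite_singleton _)
        _ = 1 := Set.ncard_singleton _
    have hmem : ([] : List Bool) ∈ Z := by
      constructor
      · simp [hn0]
      · intro i hi; omega
    have h2 : 1 ≤ Z.ncard := by
      rw [Nat.one_le_iff_ne_zero]
      intro h
      rw [Set.ncard_eq_zero hZfin] at h
      exact absurd (h ▸ hmem) (Set.notMem_empty _)
    omega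
  · -- n ≥ 1
    set B1 := {x ∈ B | (fQ x).getD 0 false = true} with hB1
    set B2 := {x ∈ B | (fQ x).getD 0 false = false} with hB2
    have hunion : B = B1 ∪ B2 := by
      ext x
      constructor
      · intro hx
        rcases Bool.eq_false_or_eq_true ((fQ x).getD 0 false) with h | h
        · exact Or.inl ⟨hx, h⟩
        · exact Or.inr ⟨hx, h⟩
      · rintro (⟨hx, _⟩ | ⟨hx, _⟩) <;> exact hx
    have hmaps : ∀ x ∈ B, (fQ x).tail ∈ Z := by
      intro x hx
      have hxn := hB x hx
      constructor
      · simp [fQ_length, hxn]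
      · intro i hi
        rw [tail_getD, tail_getD]
        exact hnoconsec x hxn (i+1) (by omega) (by omega)
    have hkey : ∀ (b : Bool) (S : Set (List Bool)),
        S = {x ∈ B | (fQ x).getD 0 false = b} → S.ncard ≤ Z.ncard := by
      intro b S hS
      have hinj2 : Set.InjOn (fun x => (fQ x).tail) S := by
        intro x hx y hy htail
        rw [hS] at hx hy
        apply hinj hx.1 hy.1
        have hxne : fQ x ≠ [] := by
          intro h
          have := fQ_length x
          rw [h, hB x hx.1] at this
          simp at this; omega
        have hyne : fQ y ≠ [] := by
          intro h
          have := fQ_length y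
          rw [h, hB y hy.1] at this
          simp at this; omega
        obtain ⟨a, la, hax⟩ := List.exists_cons_of_ne_nil hxne
        obtain ⟨c, lc, hcy⟩ := List.exists_cons_of_ne_nil hyne
        have ha : a = b := by have := hx.2; rw [hax] at this; simpa using this
        have hc : c = b := by have := hy.2; rw [hcy] at this; simpa using this
        have htail' : la = lc := by
          have h : (fQ x).tail = (fQ y).tail := htail
          rw [hax, hcy] at h
          simpa using h
        rw [hax, hcy, ha, hc, htail']
      exact Set.ncard_le_ncard_of_injOn (fun x => (fQ x).tail)
        (fun x hx => hmaps x ((hS ▸ hx).1)) hinj2 hZfin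
    have h1 : B1.ncard ≤ Z.ncard := hkey true B1 rfl
    have h2 : B2.ncard ≤ Z.ncard := hkey false B2 rfl
    calc B.ncard = (B1 ∪ B2).ncard := by rw [hunion]
      _ ≤ B1.ncard + B2.ncard := Set.ncard_union_le _ _
      _ ≤ 2 * Z.ncard := by omega
end

section
/- For the single-edge channel graph S₂ on {0,1}^2 whose unique edge joins 00 and 11 (Hamming distance 2), the maximum size of a pairwise S₂-distinguishable code in {0,1}^n is exactly 2^{⌈n/2⌉} up to a polynomial factor; in particular the capacity C_M(S₂) = 1/2. -/
open Filter

/-- `S₂`-distinguishability: the unique edge of `S₂` joins `00` and `11`. -/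
def S2dist (n : ℕ) (x y : List Bool) : Prop :=
  ∃ i, i + 1 < n ∧
    ((bpair x i = (false, false) ∧ bpair y i = (true, true)) ∨
     (bpair x i = (true, true) ∧ bpair y i = (false, false)))

/-- `M(S₂, n)`: maximum size of a pairwise `S₂`-distinguishable code in `{0,1}ⁿ`. -/
noncomputable def MS2 (n : ℕ) : ℕ :=
  sSup {k : ℕ | ∃ B : Set (List Bool),
    (∀ x ∈ B, x.length = n) ∧ B.Pairwise (S2dist n) ∧ B.ncard = k}

/-- Upper bound: any pairwise `S₂`-distinguishable code injects into `{0,1}^{⌈n/2⌉}`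
via restriction to even positions. -/
lemma S2_card_le (n : ℕ) (B : Set (List Bool)) (hp : B.Pairwise (S2dist n)) :
    B.ncard ≤ 2 ^ ((n + 1) / 2) := by
  set m := (n + 1) / 2 with hm
  set e : List Bool → (Fin m → Bool) := fun x j => x.getD (2 * (j : ℕ)) false with he
  have key : ∀ x y : List Bool, e x = e y →
      ∀ i, i + 1 < n → bpair x i = (false, false) → bpair y i = (true, true) → False := by
    intro x y hexy i hi h1 h2
    have h1a : x.getD i false = false := congrArg Prod.fst h1
    have h1b : x.getD (i+1) false = false := congrArg Prod.snd h1
    have h2a : y.getD i false = true := congrArg Prod.fst h2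
    have h2b : y.getD (i+1) false = true := congrArg Prod.snd h2
    rcases Nat.even_or_odd i with ⟨j, hj⟩ | ⟨j, hj⟩
    · have hjm : j < m := by omega
      have := congrFun hexy ⟨j, hjm⟩
      simp only [he] at this
      have h2j : 2 * j = i := by omega
      rw [h2j, h1a, h2a] at this
      exact Bool.false_ne_true this
    · have hjm : j + 1 < m := by omega
      have := congrFun hexy ⟨j + 1, hjm⟩
      simp only [he] at this
      have h2j : 2 * (j + 1) = i + 1 := by omega
      rw [h2j, h1b, h2b] at this
      exact Bool.false_ne_true this
  have hinj : Set.InjOn e B := by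
    intro x hx y hy hxy
    by_contra hne
    obtain ⟨i, hi, h⟩ := hp hx hy hne
    rcases h with ⟨h1, h2⟩ | ⟨h1, h2⟩
    · exact key x y hxy i hi h1 h2
    · exact key y x hxy.symm i hi h2 h1
  calc B.ncard = (e '' B).ncard := (Set.ncard_image_of_injOn hinj).symm
    _ ≤ (Set.univ : Set (Fin m → Bool)).ncard :=
        Set.ncard_le_ncard (Set.subset_univ _) Set.finite_univ
    _ = 2 ^ m := by
        rw [Set.ncard_univ, Nat.card_eq_fintype_card]
        simp

/-- The block code: each bit doubled, padded with a trailing `false` if `n` is odd. -/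
def blk (n : ℕ) (b : Fin (n / 2) → Bool) : List Bool :=
  List.ofFn (fun i : Fin n => if h : (i : ℕ) / 2 < n / 2 then b ⟨(i : ℕ) / 2, h⟩ else false)

lemma blk_getD (n : ℕ) (b : Fin (n / 2) → Bool) (i : ℕ) (hi : i < n) (h : i / 2 < n / 2) :
    (blk n b).getD i false = b ⟨i / 2, h⟩ := by
  have hlen : (blk n b).length = n := by simp [blk]
  rw [List.getD_eq_getElem _ _ (by omega)]
  simp only [blk]
  rw [List.getElem_ofFn]
  simp [h]

lemma S2_le_card (n : ℕ) : ∃ B : Set (List Bool),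
    (∀ x ∈ B, x.length = n) ∧ B.Pairwise (S2dist n) ∧ B.ncard = 2 ^ (n / 2) := by
  refine ⟨Set.range (blk n), ?_, ?_, ?_⟩
  · rintro x ⟨b, rfl⟩; simp [blk]
  · rintro x ⟨b, rfl⟩ y ⟨b', rfl⟩ hne
    have hbb : b ≠ b' := by rintro rfl; exact hne rfl
    obtain ⟨j, hj⟩ := Function.ne_iff.mp hbb
    have hjn : 2 * (j : ℕ) + 1 < n := by
      have := j.isLt; omega
    have hx1 := blk_getD n b (2 * (j : ℕ)) (by omega) (by omega)
    have hx2 := blk_getD n b (2 * (j : ℕ) + 1) (by omega) (by omega)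
    have hy1 := blk_getD n b' (2 * (j : ℕ)) (by omega) (by omega)
    have hy2 := blk_getD n b' (2 * (j : ℕ) + 1) (by omega) (by omega)
    have hdiv1 : 2 * (j : ℕ) / 2 = (j : ℕ) := by omega
    have hdiv2 : (2 * (j : ℕ) + 1) / 2 = (j : ℕ) := by omega
    refine ⟨2 * (j : ℕ), hjn, ?_⟩
    have hj' : (⟨2 * (j : ℕ) / 2, by omega⟩ : Fin (n / 2)) = j := by
      ext; simpa using hdiv1
    have hj'' : (⟨(2 * (j : ℕ) + 1) / 2, by omega⟩ : Fin (n / 2)) = j := by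
      ext; simpa using hdiv2
    rw [hj'] at hx1 hy1; rw [hj''] at hx2 hy2
    have hbp : bpair (blk n b) (2 * (j : ℕ)) = (b j, b j) := by
      simp only [bpair]; rw [hx1, hx2]
    have hbp' : bpair (blk n b') (2 * (j : ℕ)) = (b' j, b' j) := by
      simp only [bpair]; rw [hy1, hy2]
    rcases Bool.eq_false_or_eq_true (b j) with h1 | h1 <;>
      rcases Bool.eq_false_or_eq_true (b' j) with h2 | h2
    · exact absurd (h1.trans h2.symm) hj
    · right; rw [hbp, hbp', h1, h2]; exact ⟨rfl, rfl⟩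
    · left; rw [hbp, hbp', h1, h2]; exact ⟨rfl, rfl⟩
    · exact absurd (h1.trans h2.symm) hj
  · have hinj : Function.Injective (blk n) := by
      intro b b' hb
      funext j
      have h1 := blk_getD n b (2 * (j : ℕ)) (by have := j.isLt; omega) (by have := j.isLt; omega)
      have h2 := blk_getD n b' (2 * (j : ℕ)) (by have := j.isLt; omega) (by have := j.isLt; omega)
      have hj' : (⟨2 * (j : ℕ) / 2, by have := j.isLt; omega⟩ : Fin (n / 2)) = j := by
        exact Fin.ext (show 2 * (j:ℕ) / 2 = (j:ℕ) by omega)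
      rw [hj'] at h1 h2
      rw [← h1, ← h2, hb]
    rw [← Set.image_univ, Set.ncard_image_of_injective _ hinj, Set.ncard_univ,
      Nat.card_eq_fintype_card]
    simp

lemma MS2_bddAbove (n : ℕ) : BddAbove {k : ℕ | ∃ B : Set (List Bool),
    (∀ x ∈ B, x.length = n) ∧ B.Pairwise (S2dist n) ∧ B.ncard = k} := by
  refine ⟨2 ^ ((n + 1) / 2), ?_⟩
  rintro k ⟨B, _, hp, rfl⟩
  exact S2_card_le n B hp

lemma MS2_le (n : ℕ) : MS2 n ≤ 2 ^ ((n + 1) / 2) := by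
  apply csSup_le
  · exact ⟨2 ^ (n / 2), S2_le_card n⟩
  · rintro k ⟨B, _, hp, rfl⟩
    exact S2_card_le n B hp

lemma le_MS2 (n : ℕ) : 2 ^ (n / 2) ≤ MS2 n := by
  apply le_csSup (MS2_bddAbove n)
  exact S2_le_card n

/-- `M(S₂,n)` equals `2^⌈n/2⌉` up to a polynomial factor, and `C_M(S₂) = 1/2`. -/
theorem stmt14 :
    (∃ c d : ℕ, 0 < c ∧ ∀ n : ℕ, 1 ≤ n →
      2 ^ ((n + 1) / 2) ≤ MS2 n * (c * n ^ d) ∧ MS2 n ≤ 2 ^ ((n + 1) / 2) * (c * n ^ d)) ∧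
    Filter.limsup (fun n : ℕ => Real.logb 2 (MS2 n) / n) atTop = 1 / 2 := by
  constructor
  · refine ⟨2, 1, by norm_num, fun n hn => ⟨?_, ?_⟩⟩
    · have h1 : 2 ^ ((n + 1) / 2) ≤ 2 ^ (n / 2) * 2 := by
        rw [← pow_succ]
        exact Nat.pow_le_pow_right (by norm_num) (by omega)
      calc 2 ^ ((n + 1) / 2) ≤ 2 ^ (n / 2) * 2 := h1
        _ ≤ MS2 n * 2 := Nat.mul_le_mul_right 2 (le_MS2 n)
        _ ≤ MS2 n * (2 * n ^ 1) := by
            apply Nat.mul_le_mul_left; simp; omega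
    · calc MS2 n ≤ 2 ^ ((n + 1) / 2) := MS2_le n
        _ ≤ 2 ^ ((n + 1) / 2) * (2 * n ^ 1) := by
            apply Nat.le_mul_of_pos_right; simp; omega
  · apply Filter.Tendsto.limsup_eq
    have hlb : ∀ n : ℕ, 1 ≤ n → (1 : ℝ) / 2 - 1 / n ≤ Real.logb 2 (MS2 n) / n := by
      intro n hn
      have hpos : (0 : ℝ) < n := by exact_mod_cast hn
      have h1 : ((2 : ℝ) ^ (n / 2) : ℝ) ≤ (MS2 n : ℝ) := by exact_mod_cast le_MS2 n
      have hlog : ((n / 2 : ℕ) : ℝ) ≤ Real.logb 2 (MS2 n) := by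
        have := (Real.logb_le_logb (by norm_num : (1:ℝ) < 2)
          (by positivity : (0:ℝ) < (2:ℝ) ^ (n / 2))
          (lt_of_lt_of_le (by positivity) h1)).mpr h1
        rwa [Real.logb_pow, Real.logb_self_eq_one (by norm_num),
          mul_one] at this
      have hfloor : (n : ℝ) - 1 ≤ 2 * ((n / 2 : ℕ) : ℝ) := by
        have h : (n : ℝ) ≤ 2 * ((n / 2 : ℕ) : ℝ) + 1 := by
          exact_mod_cast (by omega : n ≤ 2 * (n / 2) + 1)
        linarith
      rw [le_div_iff₀ hpos]
      have hmul : ((1:ℝ)/2 - 1/n) * n = n/2 - 1 := by field_simp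
      rw [hmul]
      linarith
    have hub : ∀ n : ℕ, 1 ≤ n → Real.logb 2 (MS2 n) / n ≤ (1 : ℝ) / 2 + 1 / n := by
      intro n hn
      have hpos : (0 : ℝ) < n := by exact_mod_cast hn
      have h1 : (MS2 n : ℝ) ≤ ((2 : ℝ) ^ ((n + 1) / 2) : ℝ) := by exact_mod_cast MS2_le n
      have hMpos : (0 : ℝ) < (MS2 n : ℝ) := by
        have : (1 : ℕ) ≤ MS2 n := le_trans (Nat.one_le_two_pow) (le_MS2 n)
        exact_mod_cast this
      have hlog : Real.logb 2 (MS2 n) ≤ (((n + 1) / 2 : ℕ) : ℝ) := by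
        have := (Real.logb_le_logb (by norm_num : (1:ℝ) < 2) hMpos
          (lt_of_lt_of_le hMpos h1)).mpr h1
        rwa [Real.logb_pow, Real.logb_self_eq_one (by norm_num),
          mul_one] at this
      have hceil : 2 * (((n + 1) / 2 : ℕ) : ℝ) ≤ (n : ℝ) + 1 := by
        have h : 2 * ((n + 1) / 2) ≤ n + 1 := by omega
        exact_mod_cast h
      rw [div_le_iff₀ hpos]
      have hmul : ((1:ℝ)/2 + 1/n) * n = n/2 + 1 := by field_simp
      rw [hmul]
      linarith
    have hg : Filter.Tendsto (fun n : ℕ => (1 : ℝ) / 2 - 1 / n) atTop (nhds (1 / 2)) := by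
      have : Filter.Tendsto (fun _ : ℕ => (1:ℝ)/2) atTop (nhds (1/2)) := tendsto_const_nhds
      have h2 := this.sub tendsto_one_div_atTop_nhds_zero_nat
      simpa using h2
    have hh : Filter.Tendsto (fun n : ℕ => (1 : ℝ) / 2 + 1 / n) atTop (nhds (1 / 2)) := by
      have : Filter.Tendsto (fun _ : ℕ => (1:ℝ)/2) atTop (nhds (1/2)) := tendsto_const_nhds
      have h2 := this.add tendsto_one_div_atTop_nhds_zero_nat
      simpa using h2
    exact tendsto_of_tendsto_of_tendsto_of_le_of_le' hg hh
      (Filter.eventually_atTop.mpr ⟨1, hlb⟩)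
      (Filter.eventually_atTop.mpr ⟨1, hub⟩)
end

section
/- For the single-edge channel graph S₁ on {0,1}^2 whose unique edge joins 00 and 01 (Hamming distance 1), the capacity C_M(S₁) equals log₂((1+√5)/2); equivalently, M(S₁,n) grows like the Fibonacci numbers up to polynomial factors. -/
/-!
The words of length `n` built from the blocks `0` and `01` are `F(n+1)` in number and pairwise
`S₁`-distinguishable: two of them first differ where one has a block `0` followed by a `0`
and the other a block `01`. Conversely, the map keeping only the `1`s preceded by a `0` (the
first bit counting as preceded by a `1`) sends `{0,1}ⁿ` into these block words and is injective
on every distinguishable code: at a distinguishing position `i` we have `xᵢ = yᵢ = 0`, so bit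
`i+1` survives in both images and still differs. Hence `M(S₁,n) = F(n+1)` exactly, and the
capacity follows from `φⁿ ≤ φ F(n+1)` and `F(n+1) ≤ φⁿ`.
-/

open Filter

/-- `S₁`-distinguishability: the unique edge of `S₁` joins `00` and `01`. -/
def S1dist (n : ℕ) (x y : List Bool) : Prop :=
  ∃ i, i + 1 < n ∧
    ((bpair x i = (false, false) ∧ bpair y i = (false, true)) ∨
     (bpair x i = (false, true) ∧ bpair y i = (false, false)))

/-- `M(S₁, n)`: maximum size of a pairwise `S₁`-distinguishable code in `{0,1}ⁿ`. -/
noncomputable def MS1 (n : ℕ) : ℕ :=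
  sSup {k : ℕ | ∃ B : Set (List Bool),
    (∀ x ∈ B, x.length = n) ∧ B.Pairwise (S1dist n) ∧ B.ncard = k}

open Finset Real
open scoped Topology goldenRatio

def fibCode : ℕ → Finset (List Bool)
  | 0 => {[]}
  | 1 => {[false]}
  | n + 2 => (fibCode (n + 1)).image (false :: ·) ∪ (fibCode n).image (false :: true :: ·)

/-- `risingEdges p x` keeps the bits of `x` that equal `1` and follow a `0`, where `p` is the
bit before `x`. -/
def risingEdges : Bool → List Bool → List Bool
  | _, [] => []
  | p, x :: l => (!p && x) :: risingEdges x l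

theorem length_of_mem_fibCode : ∀ {n : ℕ} {x : List Bool}, x ∈ fibCode n → x.length = n
  | 0, _, hx => by simp_all [fibCode]
  | 1, _, hx => by simp_all [fibCode]
  | n + 2, _, hx => by
    simp only [fibCode, mem_union, mem_image] at hx
    rcases hx with ⟨w, hw, rfl⟩ | ⟨w, hw, rfl⟩
    · simp [length_of_mem_fibCode hw]
    · simp [length_of_mem_fibCode hw]

theorem exists_eq_false_cons_of_mem_fibCode :
    ∀ {n : ℕ} {x : List Bool}, x ∈ fibCode (n + 1) → ∃ t, x = false :: t
  | 0, _, hx => ⟨[], by simpa [fibCode] using hx⟩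
  | n + 1, _, hx => by
    simp only [fibCode, mem_union, mem_image] at hx
    rcases hx with ⟨w, _, rfl⟩ | ⟨w, _, rfl⟩
    · exact ⟨w, rfl⟩
    · exact ⟨true :: w, rfl⟩

theorem false_cons_mem_fibCode : ∀ {n : ℕ} {w : List Bool}, w ∈ fibCode n →
    false :: w ∈ fibCode (n + 1)
  | 0, _, hw => by simp_all [fibCode]
  | n + 1, w, hw => by
    simp only [fibCode, mem_union, mem_image]
    exact Or.inl ⟨w, hw, rfl⟩

theorem false_true_cons_mem_fibCode {n : ℕ} {w : List Bool} (hw : w ∈ fibCode n) :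
    false :: true :: w ∈ fibCode (n + 2) := by
  simp only [fibCode, mem_union, mem_image]
  exact Or.inr ⟨w, hw, rfl⟩

theorem card_fibCode : ∀ n, #(fibCode n) = Nat.fib (n + 1)
  | 0 => rfl
  | 1 => rfl
  | n + 2 => by
    have hdisj : Disjoint ((fibCode (n + 1)).image (false :: ·))
        ((fibCode n).image (false :: true :: ·)) := by
      simp only [disjoint_left, mem_image, not_exists, not_and]
      rintro _ ⟨w, hw, rfl⟩ v _ hv
      obtain ⟨t, rfl⟩ := exists_eq_false_cons_of_mem_fibCode hw
      simp at hv
    rw [fibCode, card_union_of_disjoint hdisj,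
      card_image_of_injective _ List.cons_injective,
      card_image_of_injective (f := (false :: true :: ·)) _
        (List.cons_injective.comp List.cons_injective),
      card_fibCode (n + 1), card_fibCode n, Nat.fib_add_two (n := n + 1), add_comm]

theorem S1dist.cons (a : Bool) {n : ℕ} {x y : List Bool} (h : S1dist n x y) :
    S1dist (n + 1) (a :: x) (a :: y) := by
  obtain ⟨i, hi, hc⟩ := h
  exact ⟨i + 1, by omega, by simpa [bpair] using hc⟩

theorem S1dist.exists_getD {n : ℕ} {x y : List Bool} (h : S1dist n x y) :
    ∃ i, x.getD i false = false ∧ y.getD i false = false ∧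
      x.getD (i + 1) false ≠ y.getD (i + 1) false := by
  obtain ⟨i, -, ⟨hx, hy⟩ | ⟨hx, hy⟩⟩ := h <;>
    simp only [bpair, Prod.mk.injEq] at hx hy <;>
    exact ⟨i, hx.1, hy.1, by rw [hx.2, hy.2]; decide⟩

theorem fibCode_pairwise_S1dist :
    ∀ n, (fibCode n : Set (List Bool)).Pairwise (S1dist n)
  | 0 => by simp [fibCode]
  | 1 => by simp [fibCode]
  | n + 2 => by
    rintro x hx y hy hxy
    simp only [fibCode, coe_union, coe_image, Set.mem_union, Set.mem_image, mem_coe] at hx hy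
    rcases hx with ⟨w, hw, rfl⟩ | ⟨w, hw, rfl⟩ <;>
      rcases hy with ⟨v, hv, rfl⟩ | ⟨v, hv, rfl⟩
    · exact (fibCode_pairwise_S1dist (n + 1) hw hv (by rintro rfl; exact hxy rfl)).cons false
    · obtain ⟨t, rfl⟩ := exists_eq_false_cons_of_mem_fibCode hw
      exact ⟨0, by omega, Or.inl ⟨rfl, rfl⟩⟩
    · obtain ⟨t, rfl⟩ := exists_eq_false_cons_of_mem_fibCode hv
      exact ⟨0, by omega, Or.inr ⟨rfl, rfl⟩⟩
    · exact ((fibCode_pairwise_S1dist n hw hv (by rintro rfl; exact hxy rfl)).cons true).cons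
        false

theorem risingEdges_false_cons (p : Bool) (l : List Bool) :
    risingEdges p (false :: l) = false :: risingEdges false l := by
  simp [risingEdges]

theorem getD_risingEdges_succ : ∀ (p : Bool) (l : List Bool) (i : ℕ),
    (risingEdges p l).getD (i + 1) false = (!l.getD i false && l.getD (i + 1) false)
  | _, [], _ => rfl
  | _, [x], 0 => by simp [risingEdges]
  | _, x :: y :: l, 0 => by simp [risingEdges]
  | _, x :: l, i + 1 => by
    simp only [risingEdges, List.getD_cons_succ]
    exact getD_risingEdges_succ x l i

theorem risingEdges_true_mem_fibCode : ∀ l : List Bool, risingEdges true l ∈ fibCode l.length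
  | [] => by simp [risingEdges, fibCode]
  | [false] => by simp [risingEdges, fibCode]
  | true :: t => false_cons_mem_fibCode (risingEdges_true_mem_fibCode t)
  | false :: true :: t => false_true_cons_mem_fibCode (risingEdges_true_mem_fibCode t)
  | false :: false :: t => by
    rw [risingEdges_false_cons, ← risingEdges_false_cons true]
    exact false_cons_mem_fibCode (risingEdges_true_mem_fibCode (false :: t))

theorem injOn_risingEdges_of_pairwise_S1dist {n : ℕ} {B : Set (List Bool)}
    (hB : B.Pairwise (S1dist n)) : B.InjOn (risingEdges true) := by
  intro x hx y hy hxy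
  by_contra hne
  obtain ⟨i, hxi, hyi, hne⟩ := (hB hx hy hne).exists_getD
  have := congrArg (·.getD (i + 1) false) hxy
  simp only [getD_risingEdges_succ, hxi, hyi, Bool.not_false, Bool.true_and] at this
  exact hne this

theorem ncard_le_fib_of_pairwise_S1dist {n : ℕ} {B : Set (List Bool)}
    (hlen : ∀ x ∈ B, x.length = n) (hB : B.Pairwise (S1dist n)) :
    B.ncard ≤ Nat.fib (n + 1) := by
  rw [← card_fibCode, ← Set.ncard_coe_finset]
  refine Set.ncard_le_ncard_of_injOn _ (fun x hx => ?_) (injOn_risingEdges_of_pairwise_S1dist hB)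
  simpa [hlen x hx] using risingEdges_true_mem_fibCode x

theorem MS1_eq_fib (n : ℕ) : MS1 n = Nat.fib (n + 1) := by
  refine IsGreatest.csSup_eq ⟨⟨fibCode n, fun x hx => length_of_mem_fibCode hx,
    fibCode_pairwise_S1dist n, by rw [Set.ncard_coe_finset, card_fibCode]⟩, ?_⟩
  rintro k ⟨B, hlen, hB, rfl⟩
  exact ncard_le_fib_of_pairwise_S1dist hlen hB

theorem tendsto_log_div_of_le_mul_pow {a c C : ℝ} {u : ℕ → ℝ} (ha : 0 < a) (hc : 0 < c)
    (hlow : ∀ n, a ^ n ≤ c * u n) (hup : ∀ n, u n ≤ C * a ^ n) :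
    Tendsto (fun n : ℕ => log (u n) / n) atTop (𝓝 (log a)) := by
  have hu : ∀ n, 0 < u n := fun n => pos_of_mul_pos_right ((pow_pos ha n).trans_le (hlow n)) hc.le
  have hC : 0 < C := pos_of_mul_pos_left ((hu 0).trans_le (hup 0)) (pow_pos ha 0).le
  have hlim (b : ℝ) : Tendsto (fun n : ℕ => b / n + log a) atTop (𝓝 (log a)) := by
    simpa using (tendsto_const_div_atTop_nhds_zero_nat b).add_const (log a)
  refine tendsto_of_tendsto_of_tendsto_of_le_of_le' (hlim (-log c)) (hlim (log C)) ?_ ?_ <;>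
    filter_upwards [eventually_gt_atTop 0] with n hn <;>
    rw [div_add' _ _ _ (by positivity), div_le_div_iff_of_pos_right (by positivity)]
  · have := log_le_log (pow_pos ha n) (hlow n)
    rw [log_pow, log_mul hc.ne' (hu n).ne'] at this
    linarith
  · have := log_le_log (hu n) (hup n)
    rw [log_mul hC.ne' (pow_pos ha n).ne', log_pow] at this
    linarith

theorem goldenRatio_pow_le_mul_fib_succ (n : ℕ) : φ ^ n ≤ φ * Nat.fib (n + 1) := by
  have hfib : (Nat.fib n : ℝ) ≤ Nat.fib (n + 1) := by exact_mod_cast Nat.fib_le_fib_succ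
  refine le_of_mul_le_mul_left ?_ goldenRatio_pos
  calc φ * φ ^ n = φ * Nat.fib (n + 1) + Nat.fib n := by
        rw [← pow_succ', goldenRatio_mul_fib_succ_add_fib]
    _ ≤ φ * Nat.fib (n + 1) + Nat.fib (n + 1) := by gcongr
    _ = φ * (φ * Nat.fib (n + 1)) := by rw [← mul_assoc, ← sq, goldenRatio_sq]; ring

theorem fib_succ_le_goldenRatio_pow (n : ℕ) : (Nat.fib (n + 1) : ℝ) ≤ φ ^ n := by
  have h := goldenRatio_mul_fib_succ_add_fib n
  refine le_of_mul_le_mul_left ?_ goldenRatio_pos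
  rw [← pow_succ']
  linarith [(Nat.fib n).cast_nonneg (α := ℝ)]

theorem fib_succ_le_two_mul_fib {n : ℕ} (hn : 1 ≤ n) : Nat.fib (n + 1) ≤ 2 * Nat.fib n := by
  obtain ⟨m, rfl⟩ := Nat.exists_eq_add_of_le' hn
  rw [Nat.fib_add_two]
  linarith [Nat.fib_le_fib_succ (n := m)]

/-- `C_M(S₁) = log₂((1+√5)/2)`: `M(S₁,n)` grows like the Fibonacci numbers up to
polynomial factors. -/
theorem stmt15 :
    Filter.limsup (fun n : ℕ => Real.logb 2 (MS1 n) / n) atTop =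
      Real.logb 2 ((1 + Real.sqrt 5) / 2) ∧
    (∃ c d : ℕ, 0 < c ∧ ∀ n : ℕ, 1 ≤ n →
      Nat.fib n ≤ MS1 n * (c * n ^ d) ∧ MS1 n ≤ Nat.fib n * (c * n ^ d)) := by
  simp only [MS1_eq_fib]
  refine ⟨Tendsto.limsup_eq ?_, 2, 0, two_pos, fun n hn => ?_⟩
  · have hlog := tendsto_log_div_of_le_mul_pow (C := 1) goldenRatio_pos goldenRatio_pos
      goldenRatio_pow_le_mul_fib_succ (by simpa using fib_succ_le_goldenRatio_pow)
    exact (hlog.div_const (log 2)).congr fun n => by simp only [logb, div_right_comm]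
  · simp only [pow_zero, mul_one]
    exact ⟨Nat.fib_le_fib_succ.trans (Nat.le_mul_of_pos_right _ two_pos),
      (fib_succ_le_two_mul_fib hn).trans_eq (mul_comm _ _)⟩
end

section
/- Let P be the directed graph on vertex set {0,1} with edges {(0,0), (0,1), (1,0)}, and let G be the digraph on {0,1} with the single edge (0,1). Then ω_s(G^n, P)—the largest antichain (under coordinatewise domination) among binary strings of length n with no two consecutive 1's—satisfies limsup_n (1/n) log₂ ω_s(G^n, P) = log₂((1+√5)/2). -/
/-!
Strings of length `n` with no two consecutive ones are counted by `fib (n + 2)`, which lies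
between `φ ^ (n + 1) / 2` and `φ ^ (n + 1)`; this bounds `ω_s` from above. Two distinct strings
with the same number of ones have incomparable supports, so by pigeonhole on the number of ones
some weight class is an antichain of size at least `fib (n + 2) / (n + 1)`. The polynomial loss
is invisible at exponential scale, so `log₂ ω_s / n` converges to `log₂ φ`.
-/

open Filter

/-- Binary strings of length `n` with no two consecutive 1's (vertex sequences of the
topological Markov type `P` with edges `{(0,0), (0,1), (1,0)}`). -/
def NoConsecOnes (n : ℕ) (x : List Bool) : Prop :=
  x.length = n ∧ ∀ i, i + 1 < n → ¬ (x.getD i false = true ∧ x.getD (i+1) false = true)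

/-- `ω_s(Gⁿ, P)`: the largest symmetric clique of `Gⁿ` (for the digraph `G` on `{0,1}`
with single edge `(0,1)`) induced on strings with no two consecutive 1's, i.e. the largest
family of such strings which is an antichain under coordinatewise domination. -/
noncomputable def omegaS (n : ℕ) : ℕ :=
  sSup {k : ℕ | ∃ B : Set (List Bool),
    (∀ x ∈ B, NoConsecOnes n x) ∧
    (∀ x ∈ B, ∀ y ∈ B, x ≠ y →
      (∃ i, i < n ∧ x.getD i false = false ∧ y.getD i false = true) ∧
      (∃ j, j < n ∧ x.getD j false = true ∧ y.getD j false = false)) ∧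
    B.ncard = k}

open Finset Real Topology
open scoped goldenRatio

lemma noConsecOnes_iff_isChain {n : ℕ} {x : List Bool} :
    NoConsecOnes n x ↔ x.length = n ∧ x.IsChain (fun a b => ¬(a = true ∧ b = true)) := by
  rw [NoConsecOnes, List.isChain_iff_getElem]
  refine and_congr_right fun hx => ⟨fun h i hi => ?_, fun h i hi => ?_⟩
  · simpa only [List.getD_eq_getElem _ _ (by omega : i < x.length), List.getD_eq_getElem _ _ hi]
      using h i (hx ▸ hi)
  · simpa only [List.getD_eq_getElem _ _ (by omega : i < x.length),
      List.getD_eq_getElem _ _ (by omega : i + 1 < x.length)] using h i (by omega)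

def noConsecOnesStrings : ℕ → Finset (List Bool)
  | 0 => {[]}
  | 1 => {[false], [true]}
  | n + 2 => (noConsecOnesStrings (n + 1)).image (false :: ·) ∪
      (noConsecOnesStrings n).image (fun l => true :: false :: l)

lemma mem_noConsecOnesStrings {n : ℕ} {x : List Bool} :
    x ∈ noConsecOnesStrings n ↔ NoConsecOnes n x := by
  rw [noConsecOnes_iff_isChain]
  induction n using noConsecOnesStrings.induct generalizing x with
  | case1 => cases x <;> simp [noConsecOnesStrings]
  | case2 => rcases x with _ | ⟨a, _ | ⟨b, t⟩⟩ <;> simp [noConsecOnesStrings]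
  | case3 n ih₂ ih₁ =>
    rcases x with _ | ⟨a, _ | ⟨b, t⟩⟩
    · simp [noConsecOnesStrings]
    · simp [noConsecOnesStrings, ih₂]
    · simp only [noConsecOnesStrings, mem_union, mem_image, List.cons.injEq, ih₁, ih₂]
      cases a <;> cases b <;> simp [List.isChain_cons]

lemma card_noConsecOnesStrings (n : ℕ) : #(noConsecOnesStrings n) = Nat.fib (n + 2) := by
  induction n using noConsecOnesStrings.induct with
  | case1 => rfl
  | case2 => rfl
  | case3 n ih₂ ih₁ =>
    rw [noConsecOnesStrings, card_union_of_disjoint, card_image_of_injective _ List.cons_injective,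
      card_image_of_injective _ (fun _ _ h => by simpa using h), ih₁, ih₂,
      Nat.fib_add_two (n := n + 2)]
    · ring
    · simp [disjoint_left]

def trueIndices (n : ℕ) (x : List Bool) : Finset ℕ := {i ∈ range n | x.getD i false = true}

lemma mem_trueIndices {n i : ℕ} {x : List Bool} :
    i ∈ trueIndices n x ↔ i < n ∧ x.getD i false = true := by
  simp [trueIndices]

lemma eq_of_trueIndices_eq {n : ℕ} {x y : List Bool} (hx : x.length = n) (hy : y.length = n)
    (h : trueIndices n x = trueIndices n y) : x = y := by
  refine List.ext_getElem (hx.trans hy.symm) fun i hix hiy => ?_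
  have hi : i ∈ trueIndices n x ↔ i ∈ trueIndices n y := by rw [h]
  rw [mem_trueIndices, mem_trueIndices, List.getD_eq_getElem _ _ hix,
    List.getD_eq_getElem _ _ hiy] at hi
  exact Bool.eq_iff_iff.2 (and_congr_right_iff.1 hi (hx ▸ hix))

lemma exists_false_true_of_card_trueIndices_eq {n : ℕ} {x y : List Bool} (hx : x.length = n)
    (hy : y.length = n) (hcard : #(trueIndices n x) = #(trueIndices n y)) (hne : x ≠ y) :
    ∃ i, i < n ∧ x.getD i false = false ∧ y.getD i false = true := by
  by_contra! h
  have hsub : trueIndices n y ⊆ trueIndices n x := fun i hi => by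
    rw [mem_trueIndices] at hi ⊢
    exact ⟨hi.1, by_contra fun hxi => h i hi.1 (Bool.eq_false_iff.2 hxi) hi.2⟩
  exact hne (eq_of_trueIndices_eq hx hy (eq_of_subset_of_card_le hsub hcard.le).symm)

lemma ncard_le_fib_of_forall_noConsecOnes {n : ℕ} {B : Set (List Bool)}
    (hB : ∀ x ∈ B, NoConsecOnes n x) : B.ncard ≤ Nat.fib (n + 2) := by
  rw [← card_noConsecOnesStrings, ← Set.ncard_coe_finset]
  exact Set.ncard_le_ncard fun x hx => mem_noConsecOnesStrings.2 (hB x hx)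

lemma omegaS_le_fib (n : ℕ) : omegaS n ≤ Nat.fib (n + 2) :=
  csSup_le' <| by rintro _ ⟨B, hB, -, rfl⟩; exact ncard_le_fib_of_forall_noConsecOnes hB

lemma card_le_omegaS {n : ℕ} (B : Finset (List Bool)) (hB : ∀ x ∈ B, NoConsecOnes n x)
    (hanti : ∀ x ∈ B, ∀ y ∈ B, x ≠ y →
      ∃ i, i < n ∧ x.getD i false = false ∧ y.getD i false = true) :
    #B ≤ omegaS n := by
  refine le_csSup ⟨Nat.fib (n + 2), ?_⟩
    ⟨B, hB, fun x hx y hy hxy => ⟨hanti x hx y hy hxy, ?_⟩, Set.ncard_coe_finset B⟩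
  · rintro _ ⟨B, hB, -, rfl⟩
    exact ncard_le_fib_of_forall_noConsecOnes hB
  · obtain ⟨j, hj, hyj, hxj⟩ := hanti y hy x hx hxy.symm
    exact ⟨j, hj, hxj, hyj⟩

lemma fib_div_le_omegaS (n : ℕ) : (Nat.fib (n + 2) : ℝ) / (n + 1) ≤ omegaS n := by
  obtain ⟨k, -, hk⟩ := exists_le_card_fiber_of_nsmul_le_card_of_maps_to
    (s := noConsecOnesStrings n) (t := range (n + 1)) (f := fun x => #(trueIndices n x))
    (fun x _ => mem_range.2 (Nat.lt_succ_of_le ((card_filter_le _ _).trans (card_range n).le)))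
    nonempty_range_add_one (b := (Nat.fib (n + 2) : ℝ) / (n + 1))
    (by simp [card_noConsecOnesStrings]; field_simp; rfl)
  refine hk.trans (Nat.cast_le.2 (card_le_omegaS _ (fun x hx => ?_) fun x hx y hy hxy => ?_))
  · exact mem_noConsecOnesStrings.1 (mem_filter.1 hx).1
  · rw [mem_filter, mem_noConsecOnesStrings] at hx hy
    exact exists_false_true_of_card_trueIndices_eq hx.1.1 hy.1.1 (hx.2.trans hy.2.symm) hxy

lemma fib_add_two_le_goldenRatio_pow (n : ℕ) : (Nat.fib (n + 2) : ℝ) ≤ φ ^ (n + 1) := by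
  rw [← goldenRatio_mul_fib_succ_add_fib, Nat.fib_add_two, Nat.cast_add, add_comm]
  gcongr
  exact le_mul_of_one_le_left (Nat.cast_nonneg _) one_lt_goldenRatio.le

lemma goldenRatio_pow_le_two_mul_fib_add_two (n : ℕ) :
    φ ^ (n + 1) ≤ 2 * Nat.fib (n + 2) := by
  rw [← goldenRatio_mul_fib_succ_add_fib, Nat.fib_add_two, Nat.cast_add]
  nlinarith [goldenRatio_lt_two, (Nat.fib (n + 1)).cast_nonneg (α := ℝ),
    (Nat.fib n).cast_nonneg (α := ℝ)]

lemma tendsto_log_mul_add_one_div_atTop (C : ℝ) (hC : 0 < C) :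
    Tendsto (fun n : ℕ => log (C * (n + 1)) / n) atTop (𝓝 0) := by
  -- at `x = C * (n + 1)` the denominator `C⁻¹ * x - 1` is `n`
  have h := (tendsto_pow_log_div_mul_add_atTop C⁻¹ (-1) 1 (inv_ne_zero hC.ne')).comp
    ((tendsto_natCast_atTop_atTop.atTop_add (tendsto_const_nhds (x := (1 : ℝ)))).const_mul_atTop
      hC)
  refine h.congr fun n => ?_
  simp [inv_mul_cancel_left₀ hC.ne']

lemma tendsto_log_div_of_le_of_le {r C : ℝ} (hr : 0 < r) (hC : 0 < C) {a : ℕ → ℝ}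
    (hlow : ∀ n, r ^ n / (C * (n + 1)) ≤ a n) (hup : ∀ n, a n ≤ C * r ^ n) :
    Tendsto (fun n => log (a n) / n) atTop (𝓝 (log r)) := by
  refine tendsto_of_tendsto_of_tendsto_of_le_of_le'
    (g := fun n : ℕ => log r - log (C * (n + 1)) / n) (h := fun n : ℕ => log r + log C / n)
    (by simpa using tendsto_const_nhds.sub (tendsto_log_mul_add_one_div_atTop C hC))
    (by simpa using tendsto_const_nhds.add (tendsto_const_div_atTop_nhds_zero_nat (log C)))
    ?_ ?_
  · filter_upwards [eventually_gt_atTop 0] with n hn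
    have h := log_le_log (by positivity) (hlow n)
    rw [log_div (by positivity) (by positivity), log_pow] at h
    calc log r - log (C * (n + 1)) / n = (n * log r - log (C * (n + 1))) / n := by field_simp
      _ ≤ log (a n) / n := by gcongr
  · filter_upwards [eventually_gt_atTop 0] with n hn
    have h := log_le_log ((by positivity : 0 < r ^ n / (C * (n + 1))).trans_le (hlow n)) (hup n)
    rw [log_mul hC.ne' (by positivity), log_pow] at h
    calc log (a n) / n ≤ (log C + n * log r) / n := by gcongr
      _ = log r + log C / n := by field_simp; ring

theorem stmt16 :
    Filter.limsup (fun n : ℕ => Real.logb 2 (omegaS n) / n) atTop =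
      Real.logb 2 ((1 + Real.sqrt 5) / 2) := by
  have hlow (n : ℕ) : φ ^ n / (2 * (n + 1)) ≤ omegaS n :=
    calc φ ^ n / (2 * (n + 1)) ≤ φ ^ (n + 1) / 2 / (n + 1) := by
          rw [div_div]; gcongr; exacts [one_lt_goldenRatio.le, n.le_succ]
      _ ≤ Nat.fib (n + 2) / (n + 1) := by
          gcongr; linarith [goldenRatio_pow_le_two_mul_fib_add_two n]
      _ ≤ omegaS n := fib_div_le_omegaS n
  have hup (n : ℕ) : (omegaS n : ℝ) ≤ 2 * φ ^ n :=
    calc (omegaS n : ℝ) ≤ Nat.fib (n + 2) := by exact_mod_cast omegaS_le_fib n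
      _ ≤ φ ^ (n + 1) := fib_add_two_le_goldenRatio_pow n
      _ ≤ 2 * φ ^ n := by rw [pow_succ']; gcongr; exact goldenRatio_lt_two.le
  have h := (tendsto_log_div_of_le_of_le goldenRatio_pos two_pos hlow hup).div_const (log 2)
  exact (h.congr fun n => by rw [logb, div_right_comm]).limsup_eq
end

section
/- Let C*_n = {0,1}^n ∩ {0,01,011}*, partitioned into classes according to the number of occurrences of the block 011 in the (unique) decomposition of each string. Then the number of classes is at most ⌊n/3⌋ + 1, and hence some class C_n satisfies |C_n| ≥ |C*_n| / (⌊n/3⌋ + 1); moreover any two distinct strings in the same class are F-distinguishable, where F is the complete graph on {00, 01, 10}. -/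
/-- `Cstar n`: binary strings of length `n` decomposable into the blocks 0, 01, 011. -/
def Cstar (n : ℕ) : Set (List Bool) :=
  {x | x.length = n ∧ ∃ L, Decomp blocks3 L x}

/-- The class of strings of `Cstar n` whose decomposition uses the block 011 exactly `k`
times. -/
def CstarClass (n k : ℕ) : Set (List Bool) :=
  {x ∈ Cstar n | ∃ L, Decomp blocks3 L x ∧ L.count [false, true, true] = k}

/-- Inductive characterization of strings decomposable into 0, 01, 011, with the count of
011 blocks. -/
inductive LangC : ℕ → List Bool → Prop
  | nil : LangC 0 []
  | b0 {k t} : LangC k t → LangC k (false :: t)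
  | b01 {k t} : LangC k t → LangC k (false :: true :: t)
  | b011 {k t} : LangC k t → LangC (k + 1) (false :: true :: true :: t)

lemma decomp_langC : ∀ L x, Decomp blocks3 L x →
    LangC (L.count [false, true, true]) x := by
  intro L
  induction L with
  | nil => intro x ⟨_, hx⟩; simp at hx; subst hx; exact LangC.nil
  | cons b L ih =>
    intro x ⟨hmem, hx⟩
    have hb : b ∈ blocks3 := hmem b (by simp)
    have hL : Decomp blocks3 L L.flatten := ⟨fun c hc => hmem c (by simp [hc]), rfl⟩
    have htail := ih _ hL
    simp only [List.flatten_cons] at hx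
    subst hx
    simp only [blocks3, List.mem_cons, List.not_mem_nil, or_false] at hb
    rcases hb with rfl | rfl | rfl
    · simpa [List.count_cons] using LangC.b0 htail
    · simpa [List.count_cons] using LangC.b01 htail
    · simpa [List.count_cons] using LangC.b011 htail

lemma langC_nil {k : ℕ} (h : LangC k []) : k = 0 := by cases h; rfl

lemma langC_cons {k : ℕ} {x : List Bool} (h : LangC k x) (hne : x ≠ []) :
    ∃ t, x = false :: t := by
  cases h with
  | nil => exact absurd rfl hne
  | b0 h => exact ⟨_, rfl⟩
  | b01 h => exact ⟨_, rfl⟩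
  | b011 h => exact ⟨_, rfl⟩

lemma langC_len1 {k : ℕ} {x : List Bool} (h : LangC k x) (hl : x.length = 1) :
    k = 0 := by
  cases h with
  | nil => rfl
  | b0 h => simp at hl; subst hl; exact langC_nil h
  | b01 h => simp at hl
  | b011 h => simp at hl

lemma bpair_cons (c : Bool) (x : List Bool) (i : ℕ) :
    bpair (c :: x) (i + 1) = bpair x i := by
  simp [bpair]

lemma langC_main : ∀ x k, LangC k x → ∀ y, LangC k y → x.length = y.length → x ≠ y →
    ∃ i, i + 1 < x.length ∧ bpair x i ≠ bpair y i ∧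
      bpair x i ≠ (true, true) ∧ bpair y i ≠ (true, true) := by
  intro x k hx
  induction hx with
  | nil =>
    intro y _ hlen hne
    exfalso; apply hne
    exact (List.length_eq_zero_iff.mp hlen.symm).symm
  | @b0 k t ht ih =>
    intro y hy hlen hne
    cases hy with
    | nil => simp at hlen
    | @b0 k' t' ht' =>
      have htne : t ≠ t' := fun h => hne (by rw [h])
      obtain ⟨i, hi, h1, h2, h3⟩ := ih t' ht' (by simpa using hlen) htne
      exact ⟨i + 1, by simpa using hi, by simpa [bpair_cons] using h1,
        by simpa [bpair_cons] using h2, by simpa [bpair_cons] using h3⟩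
    | @b01 k' t' ht' =>
      -- x = 0::t, y = 0::1::t', t nonempty starting with 0
      have hlt : t ≠ [] := by
        intro h; subst h; simp at hlen
      obtain ⟨u, hu⟩ := langC_cons ht hlt
      subst hu
      refine ⟨0, by simp only [List.length_cons]; omega, ?_, ?_, ?_⟩ <;> simp [bpair]
    | @b011 k' t' ht' =>
      have hlt : t ≠ [] := by
        intro h; subst h; simp at hlen
      obtain ⟨u, hu⟩ := langC_cons ht hlt
      subst hu
      refine ⟨0, by simp only [List.length_cons]; omega, ?_, ?_, ?_⟩ <;> simp [bpair]
  | @b01 k t ht ih =>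
    intro y hy hlen hne
    cases hy with
    | nil => simp at hlen
    | @b0 k' t' ht' =>
      have hlt : t' ≠ [] := by
        intro h; subst h; simp at hlen
      obtain ⟨u, hu⟩ := langC_cons ht' hlt
      subst hu
      refine ⟨0, by simp, ?_, ?_, ?_⟩ <;> simp [bpair]
    | @b01 k' t' ht' =>
      have htne : t ≠ t' := fun h => hne (by rw [h])
      obtain ⟨i, hi, h1, h2, h3⟩ := ih t' ht' (by simpa using hlen) htne
      exact ⟨i + 2, by simp at hi ⊢; omega,
        by simpa [bpair_cons] using h1,
        by simpa [bpair_cons] using h2, by simpa [bpair_cons] using h3⟩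
    | @b011 k' t' ht' =>
      -- x = 0::1::t with LangC (k'+1) t ; y = 0::1::1::t'
      have hlt : t ≠ [] := by
        intro h; subst h; simp at hlen
      obtain ⟨u, hu⟩ := langC_cons ht hlt
      subst hu
      rcases eq_or_ne t' [] with rfl | ht'ne
      · -- lengths: 2 + (1+|u|) = 3, u = [], t = [0], k'+1 = 0? contradiction
        exfalso
        simp at hlen
        subst hlen
        have := langC_len1 ht (by simp)
        omega
      · obtain ⟨v, hv⟩ := langC_cons ht' ht'ne
        subst hv
        refine ⟨2, by simp at hlen ⊢; omega, ?_, ?_, ?_⟩ <;> simp [bpair]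
  | @b011 k t ht ih =>
    intro y hy hlen hne
    cases hy with
    | @b0 k' t' ht' =>
      have hlt : t' ≠ [] := by
        intro h; subst h; simp at hlen
      obtain ⟨u, hu⟩ := langC_cons ht' hlt
      subst hu
      refine ⟨0, by simp, ?_, ?_, ?_⟩ <;> simp [bpair]
    | @b01 k' t' ht' =>
      -- x = 0::1::1::t, y = 0::1::t' with LangC (k+1) t'
      have hlt : t' ≠ [] := by
        intro h; subst h; simp at hlen
      obtain ⟨u, hu⟩ := langC_cons ht' hlt
      subst hu
      rcases eq_or_ne t [] with rfl | htne
      · exfalso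
        simp at hlen
        subst hlen
        have h0 := langC_nil ht
        have := langC_len1 ht' (by simp)
        omega
      · obtain ⟨v, hv⟩ := langC_cons ht htne
        subst hv
        refine ⟨2, by simp, ?_, ?_, ?_⟩ <;> simp [bpair]
    | @b011 k' t' ht' =>
      have htne : t ≠ t' := fun h => hne (by rw [h])
      obtain ⟨i, hi, h1, h2, h3⟩ := ih t' ht' (by simpa using hlen) htne
      exact ⟨i + 3, by simp at hi ⊢; omega,
        by simpa [bpair_cons] using h1,
        by simpa [bpair_cons] using h2, by simpa [bpair_cons] using h3⟩

lemma count_le_third {L : List (List Bool)} (h : ∀ b ∈ L, b ∈ blocks3) :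
    3 * L.count [false, true, true] ≤ L.flatten.length := by
  induction L with
  | nil => simp
  | cons b L ih =>
    have hb : b ∈ blocks3 := h b (by simp)
    have hrest := ih (fun c hc => h c (by simp [hc]))
    simp only [blocks3, List.mem_cons, List.not_mem_nil, or_false] at hb
    rcases hb with rfl | rfl | rfl <;>
      simp [List.count_cons, List.length_flatten] at hrest ⊢ <;> omega

/-- Partitioning `Cstar n` by the number of occurrences of the block 011 gives at most
`⌊n/3⌋ + 1` classes, some class has size at least `|C*_n|/(⌊n/3⌋+1)`, and distinct strings
in a common class are `F`-distinguishable. -/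
theorem stmt17 (n : ℕ) :
    (∀ x ∈ Cstar n, ∃ k ≤ n / 3, x ∈ CstarClass n k) ∧
    (∃ k ≤ n / 3, (Cstar n).ncard ≤ (CstarClass n k).ncard * (n / 3 + 1)) ∧
    (∀ k, ∀ x ∈ CstarClass n k, ∀ y ∈ CstarClass n k, x ≠ y → Fdist n x y) := by
  have part1 : ∀ x ∈ Cstar n, ∃ k ≤ n / 3, x ∈ CstarClass n k := by
    rintro x ⟨hlen, L, hL⟩
    refine ⟨L.count [false, true, true], ?_, ⟨⟨hlen, L, hL⟩, L, hL, rfl⟩⟩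
    have := count_le_third hL.1
    rw [hL.2, hlen] at this
    omega
  refine ⟨part1, ?_, ?_⟩
  · -- pigeonhole
    have hfin : (Cstar n).Finite :=
      (List.finite_length_eq Bool n).subset (fun x hx => hx.1)
    classical
    set F : Finset (List Bool) := hfin.toFinset with hF
    set s : Finset ℕ := Finset.range (n / 3 + 1) with hs
    obtain ⟨k, hk, hkmax⟩ := s.exists_max_image
      (fun k => (F.filter (· ∈ CstarClass n k)).card) ⟨0, by simp [hs]⟩
    have hks : k ≤ n / 3 := by
      simp only [hs, Finset.mem_range] at hk; omega
    refine ⟨k, hks, ?_⟩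
    have hsub : F ⊆ s.biUnion (fun j => F.filter (· ∈ CstarClass n j)) := by
      intro x hx
      have hxC : x ∈ Cstar n := by rwa [hF, Set.Finite.mem_toFinset] at hx
      obtain ⟨j, hj, hjx⟩ := part1 x hxC
      exact Finset.mem_biUnion.mpr ⟨j, by simp [hs]; omega,
        Finset.mem_filter.mpr ⟨hx, hjx⟩⟩
    have hcard : F.card ≤ s.card * (F.filter (· ∈ CstarClass n k)).card := by
      calc F.card ≤ (s.biUnion (fun j => F.filter (· ∈ CstarClass n j))).card :=
            Finset.card_le_card hsub
        _ ≤ s.card * (F.filter (· ∈ CstarClass n k)).card :=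
            Finset.card_biUnion_le_card_mul _ _ _ (fun j hj => hkmax j hj)
    have h1 : (Cstar n).ncard = F.card := by
      rw [hF, Set.ncard_eq_toFinset_card _ hfin]
    have h2 : (F.filter (· ∈ CstarClass n k)).card ≤ (CstarClass n k).ncard := by
      have hfin2 : (CstarClass n k).Finite := hfin.subset (fun x hx => hx.1)
      rw [Set.ncard_eq_toFinset_card _ hfin2]
      apply Finset.card_le_card
      intro x hx
      simp only [Set.Finite.mem_toFinset]
      exact (Finset.mem_filter.mp hx).2
    have hscard : s.card = n / 3 + 1 := by simp [hs]
    calc (Cstar n).ncard = F.card := h1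
      _ ≤ s.card * (F.filter (· ∈ CstarClass n k)).card := hcard
      _ ≤ (CstarClass n k).ncard * (n / 3 + 1) := by
          rw [hscard, Nat.mul_comm]
          exact Nat.mul_le_mul_right _ h2
  · -- distinguishability
    rintro k x ⟨⟨hxlen, _⟩, Lx, hLx, hLxc⟩ y ⟨⟨hylen, _⟩, Ly, hLy, hLyc⟩ hne
    have hx : LangC k x := hLxc ▸ decomp_langC Lx x hLx
    have hy : LangC k y := hLyc ▸ decomp_langC Ly y hLy
    obtain ⟨i, hi, h1, h2, h3⟩ :=
      langC_main x k hx y hy (by rw [hxlen, hylen]) hne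
    exact ⟨i, by rwa [hxlen] at hi, h1, h2, h3⟩
end
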